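/- arXiv:2004.05542 — 9 statements merged into one kernel-verified Lean document; each statement's English description precedes it below -/
import Mathlib

section
/- Let $\Theta \subset \mathbb{R}^q$ be bounded with diameter $\mathrm{diam}(\Theta)$. For any two discrete measures $G = \sum_{i=1}^k p_i \delta_{\theta_i}$ and $G' = \sum_{i=1}^k p'_i \delta_{\theta'_i}$ on $\Theta$ with $k$ atoms each, the first Wasserstein distance satisfies $W_1(G,G') \leq \max\{1, \mathrm{diam}(\Theta)/2\} \cdot D_1(G,G')$, where $D_1(G,G') = \min_{\tau \in S_k} \sum_{i=1}^k (\|\theta_{\tau(i)} - \theta'_i\|_2 + |p_{\tau(i)} - p'_i|)$. -/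
open scoped BigOperators

/-- For discrete measures with `k` atoms in a bounded subset `Θ` of `ℝ^q`,
`W₁(G,G') ≤ max {1, diam(Θ)/2} ⋅ D₁(G,G')`. -/
theorem stmt_1 (q k : ℕ) (Θ : Set (EuclideanSpace ℝ (Fin q)))
    (hΘ : Bornology.IsBounded Θ)
    (θ θ' : Fin k → EuclideanSpace ℝ (Fin q))
    (hθ : ∀ i, θ i ∈ Θ) (hθ' : ∀ i, θ' i ∈ Θ)
    (hθinj : Function.Injective θ) (hθ'inj : Function.Injective θ')
    (p p' : Fin k → ℝ) (hp : ∀ i, 0 < p i) (hp' : ∀ i, 0 < p' i)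
    (hps : ∑ i, p i = 1) (hp's : ∑ i, p' i = 1) :
    sInf {s : ℝ | ∃ Q : Fin k → Fin k → ℝ,
        (∀ i j, 0 ≤ Q i j) ∧ (∀ i, ∑ j, Q i j = p i) ∧ (∀ j, ∑ i, Q i j = p' j) ∧
        s = ∑ i, ∑ j, Q i j * dist (θ i) (θ' j)} ≤
      max 1 (Metric.diam Θ / 2) *
        ⨅ τ : Equiv.Perm (Fin k), ∑ i, (dist (θ (τ i)) (θ' i) + |p (τ i) - p' i|) := by
  set C := max 1 (Metric.diam Θ / 2) with hC
  set f : Equiv.Perm (Fin k) → ℝ :=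
    fun τ => ∑ i, (dist (θ (τ i)) (θ' i) + |p (τ i) - p' i|) with hf
  obtain ⟨τ, hτ⟩ := Finite.exists_min f
  have hinf : (⨅ σ, f σ) = f τ :=
    le_antisymm (ciInf_le (Finite.bddBelow_range f) τ) (le_ciInf hτ)
  rw [hinf]
  -- setup
  set r : Fin k → ℝ := fun i => p (τ i) with hr
  have hrs : ∑ i, r i = 1 := by rw [hr]; rw [Equiv.sum_comp τ p]; exact hps
  set a : Fin k → ℝ := fun i => max (r i - p' i) 0 with ha
  set b : Fin k → ℝ := fun i => max (p' i - r i) 0 with hb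
  have ha0 : ∀ i, 0 ≤ a i := fun i => le_max_right _ _
  have hb0 : ∀ i, 0 ≤ b i := fun i => le_max_right _ _
  set m := ∑ i, a i with hm
  have hm0 : 0 ≤ m := Finset.sum_nonneg fun i _ => ha0 i
  have hab : ∀ i, a i + b i = |r i - p' i| := by
    intro i
    rcases le_total (r i) (p' i) with h | h
    · simp [ha, hb, max_eq_right (sub_nonpos.mpr h), max_eq_left (sub_nonneg.mpr h),
        abs_of_nonpos (sub_nonpos.mpr h)]
    · simp [ha, hb, max_eq_left (sub_nonneg.mpr h), max_eq_right (sub_nonpos.mpr h),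
        abs_of_nonneg (sub_nonneg.mpr h)]
  have hamb : ∀ i, a i - b i = r i - p' i := by
    intro i
    rcases le_total (r i) (p' i) with h | h
    · simp [ha, hb, max_eq_right (sub_nonpos.mpr h), max_eq_left (sub_nonneg.mpr h)]
    · simp [ha, hb, max_eq_left (sub_nonneg.mpr h), max_eq_right (sub_nonpos.mpr h)]
  have hbsum : ∑ i, b i = m := by
    have : ∑ i, (a i - b i) = 0 := by
      simp only [hamb]
      rw [Finset.sum_sub_distrib, hrs, hp's, sub_self]
    rw [Finset.sum_sub_distrib] at this
    linarith
  have h2m : 2 * m = ∑ i, |r i - p' i| := by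
    have : ∑ i, (a i + b i) = ∑ i, |r i - p' i| := Finset.sum_congr rfl fun i _ => hab i
    rw [Finset.sum_add_distrib, hbsum] at this
    linarith
  have hmina : ∀ i, min (r i) (p' i) + a i = r i := by
    intro i
    rcases le_total (r i) (p' i) with h | h
    · simp [ha, min_eq_left h, max_eq_right (sub_nonpos.mpr h)]
    · simp [ha, min_eq_right h, max_eq_left (sub_nonneg.mpr h)]
  have hminb : ∀ i, min (r i) (p' i) + b i = p' i := by
    intro i
    rcases le_total (r i) (p' i) with h | h
    · simp [hb, min_eq_left h, max_eq_left (sub_nonneg.mpr h)]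
    · simp [hb, min_eq_right h, max_eq_right (sub_nonpos.mpr h)]
  have hmz : m = 0 → ∀ i, a i = 0 := by
    intro h i
    have hsum : ∑ j, a j = 0 := by rw [← hm]; exact h
    exact (Finset.sum_eq_zero_iff_of_nonneg fun j _ => ha0 j).mp hsum i (Finset.mem_univ i)
  -- the coupling
  set Q' : Fin k → Fin k → ℝ :=
    fun i j => (if i = j then min (r i) (p' i) else 0) + a i * b j / m with hQ'
  set Q : Fin k → Fin k → ℝ := fun i j => Q' (τ.symm i) j with hQ
  have hQ0 : ∀ i j, 0 ≤ Q i j := by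
    intro i j
    apply add_nonneg
    · split
      · exact le_min (hp (τ _)).le (hp' _).le
      · exact le_refl 0
    · exact div_nonneg (mul_nonneg (ha0 _) (hb0 _)) hm0
  have hQ'row : ∀ i, ∑ j, Q' i j = r i := by
    intro i
    rw [hQ']
    simp only
    rw [Finset.sum_add_distrib, Finset.sum_ite_eq Finset.univ i (fun _ => min (r i) (p' i))]
    simp only [Finset.mem_univ, if_true]
    rw [← Finset.sum_div, ← Finset.mul_sum, hbsum]
    by_cases hmz' : m = 0
    · rw [hmz']
      have := hmz hmz' i
      rw [this]
      simp only [zero_mul, zero_div, add_zero]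
      have : r i ≤ p' i := by
        have := hmz hmz' i
        rw [ha] at this
        simp only [max_eq_right_iff] at this
        -- a i = 0 means max (r i - p' i) 0 = 0, so r i - p' i ≤ 0
        nlinarith [le_max_left (r i - p' i) (0:ℝ), hmz hmz' i]
      rw [min_eq_left this]
    · rw [mul_div_assoc, div_self hmz', mul_one]
      exact hmina i
  have hQrow : ∀ i, ∑ j, Q i j = p i := by
    intro i
    rw [hQ]
    simp only
    rw [hQ'row (τ.symm i), hr]
    simp
  have hQcol : ∀ j, ∑ i, Q i j = p' j := by
    intro j
    rw [hQ]
    simp only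
    rw [Equiv.sum_comp τ.symm (fun i => Q' i j)]
    rw [hQ']
    simp only
    rw [Finset.sum_add_distrib]
    rw [Finset.sum_ite_eq' Finset.univ j (fun i => min (r i) (p' i))]
    simp only [Finset.mem_univ, if_true]
    rw [← Finset.sum_div, ← Finset.sum_mul, ← hm]
    by_cases hmz' : m = 0
    · have hbz : b j = 0 := by
        have hbsum0 : ∑ i, b i = 0 := by rw [hbsum]; exact hmz'
        exact (Finset.sum_eq_zero_iff_of_nonneg fun i _ => hb0 i).mp hbsum0 j (Finset.mem_univ j)
      rw [hmz', hbz]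
      simp only [zero_mul, zero_div, add_zero]
      have hle : p' j ≤ r j := by
        have := hbz
        rw [hb] at this
        nlinarith [le_max_left (p' j - r j) (0:ℝ)]
      rw [min_eq_right hle]
    · rw [mul_comm, mul_div_assoc, div_self hmz', mul_one]
      exact hminb j
  -- membership and bounds
  have hp'le1 : ∀ i, p' i ≤ 1 := by
    intro i
    rw [← hp's]
    exact Finset.single_le_sum (fun j _ => (hp' j).le) (Finset.mem_univ i)
  have hdiam0 : 0 ≤ Metric.diam Θ := Metric.diam_nonneg
  set s := ∑ i, ∑ j, Q i j * dist (θ i) (θ' j) with hs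
  have hbdd : BddBelow {s : ℝ | ∃ Q : Fin k → Fin k → ℝ,
      (∀ i j, 0 ≤ Q i j) ∧ (∀ i, ∑ j, Q i j = p i) ∧ (∀ j, ∑ i, Q i j = p' j) ∧
      s = ∑ i, ∑ j, Q i j * dist (θ i) (θ' j)} := by
    refine ⟨0, ?_⟩
    rintro x ⟨Q₀, h0, -, -, hx⟩
    rw [hx]
    exact Finset.sum_nonneg fun i _ => Finset.sum_nonneg fun j _ =>
      mul_nonneg (h0 i j) dist_nonneg
  have hmem : s ∈ {s : ℝ | ∃ Q : Fin k → Fin k → ℝ,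
      (∀ i j, 0 ≤ Q i j) ∧ (∀ i, ∑ j, Q i j = p i) ∧ (∀ j, ∑ i, Q i j = p' j) ∧
      s = ∑ i, ∑ j, Q i j * dist (θ i) (θ' j)} := ⟨Q, hQ0, hQrow, hQcol, rfl⟩
  refine (csInf_le hbdd hmem).trans ?_
  -- rewrite s via the permutation
  have hsrw : s = ∑ i, ∑ j, Q' i j * dist (θ (τ i)) (θ' j) := by
    rw [hs, ← Equiv.sum_comp τ (fun i => ∑ j, Q i j * dist (θ i) (θ' j))]
    refine Finset.sum_congr rfl fun i _ => Finset.sum_congr rfl fun j _ => ?_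
    rw [hQ]
    simp
  have hsplit : s = (∑ i, min (r i) (p' i) * dist (θ (τ i)) (θ' i))
      + ∑ i, ∑ j, (a i * b j / m) * dist (θ (τ i)) (θ' j) := by
    rw [hsrw, ← Finset.sum_add_distrib]
    refine Finset.sum_congr rfl fun i _ => ?_
    rw [hQ']
    simp only [add_mul, ite_mul, zero_mul]
    rw [Finset.sum_add_distrib, Finset.sum_ite_eq Finset.univ i
      (fun j => min (r i) (p' i) * dist (θ (τ i)) (θ' j))]
    simp
  -- bound the two parts
  have hA : (∑ i, min (r i) (p' i) * dist (θ (τ i)) (θ' i)) ≤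
      ∑ i, dist (θ (τ i)) (θ' i) := by
    refine Finset.sum_le_sum fun i _ => ?_
    calc min (r i) (p' i) * dist (θ (τ i)) (θ' i)
        ≤ 1 * dist (θ (τ i)) (θ' i) := by
          exact mul_le_mul_of_nonneg_right ((min_le_right _ _).trans (hp'le1 i)) dist_nonneg
      _ = dist (θ (τ i)) (θ' i) := one_mul _
  have hB : (∑ i, ∑ j, (a i * b j / m) * dist (θ (τ i)) (θ' j)) ≤ Metric.diam Θ * m := by
    by_cases hmz' : m = 0
    · calc (∑ i, ∑ j, (a i * b j / m) * dist (θ (τ i)) (θ' j)) = 0 := by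
            refine Finset.sum_eq_zero fun i _ => Finset.sum_eq_zero fun j _ => ?_
            rw [hmz hmz' i]
            ring
        _ ≤ Metric.diam Θ * m := by rw [hmz', mul_zero]
    · have step : ∀ i j, (a i * b j / m) * dist (θ (τ i)) (θ' j) ≤
          (a i * b j / m) * Metric.diam Θ := by
        intro i j
        exact mul_le_mul_of_nonneg_left
          (Metric.dist_le_diam_of_mem hΘ (hθ (τ i)) (hθ' j))
          (div_nonneg (mul_nonneg (ha0 i) (hb0 j)) hm0)
      calc (∑ i, ∑ j, (a i * b j / m) * dist (θ (τ i)) (θ' j))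
          ≤ ∑ i, ∑ j, (a i * b j / m) * Metric.diam Θ :=
            Finset.sum_le_sum fun i _ => Finset.sum_le_sum fun j _ => step i j
        _ = Metric.diam Θ * m := by
            have hms : (∑ i, a i) * (∑ j, b j) = ∑ i, ∑ j, a i * b j :=
              Finset.sum_mul_sum _ _ _ _
            have this2 : (∑ i, ∑ j, (a i * b j / m) * Metric.diam Θ)
                = ((∑ i, a i) * (∑ j, b j) / m) * Metric.diam Θ := by
              rw [hms, Finset.sum_div, Finset.sum_mul]
              refine Finset.sum_congr rfl fun i _ => ?_
              rw [Finset.sum_div, Finset.sum_mul]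
            rw [this2, ← hm, hbsum, mul_comm]
            congr 1
            field_simp
  -- absolute values match
  have habs : ∀ i, |p (τ i) - p' i| = |r i - p' i| := fun i => rfl
  have hfτ : f τ = (∑ i, dist (θ (τ i)) (θ' i)) + ∑ i, |r i - p' i| := by
    rw [hf]
    simp only
    rw [Finset.sum_add_distrib]
  have hCd : Metric.diam Θ / 2 ≤ C := le_max_right _ _
  have hC1 : (1:ℝ) ≤ C := le_max_left _ _
  have hd0 : 0 ≤ ∑ i, dist (θ (τ i)) (θ' i) :=
    Finset.sum_nonneg fun i _ => dist_nonneg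
  have habs0 : 0 ≤ ∑ i, |r i - p' i| := Finset.sum_nonneg fun i _ => abs_nonneg _
  calc s ≤ (∑ i, dist (θ (τ i)) (θ' i)) + Metric.diam Θ * m := by
        rw [hsplit]; exact add_le_add hA hB
    _ ≤ C * f τ := by
        rw [hfτ]
        nlinarith [hd0, habs0, hC1, hCd, h2m, hm0, hdiam0]
end

section
/- Fix $G_0 = \sum_{i=1}^k p_i^0 \delta_{\theta_i^0} \in \mathcal{E}_k(\Theta)$ with all $p_i^0 > 0$ and distinct atoms, and let $\rho = \min_{i < \ell} \|\theta_i^0 - \theta_\ell^0\|_2$. Then for any sequence $G_n = \sum_{i=1}^k p_i^n \delta_{\theta_i^n}$ with $p_i^n \to p_i^0$ and $\theta_i^n \to \theta_i^0$, for all sufficiently large $n$: $W_1(G_n, G_0) \geq \frac{1}{2}\min\{\min_\ell p_\ell^0, \rho/4\} \cdot D_1(G_n, G_0)$. In particular, $\liminf_{G \overset{W_1}{\to} G_0} \frac{W_1(G,G_0)}{D_1(G,G_0)} > 0$. -/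
open scoped BigOperators

/-- Fix `G₀ = ∑ p⁰ᵢ δ_{θ⁰ᵢ}` with positive weights and distinct atoms, and let `ρ` be the
minimal pairwise distance between atoms.  For any sequence `Gₙ` in `𝓔_k(Θ)` with weights
and atoms converging to those of `G₀`, eventually
`W₁(Gₙ,G₀) ≥ ½ min{minᵢ p⁰ᵢ, ρ/4} ⋅ D₁(Gₙ,G₀)`. -/
theorem stmt_2 (q k : ℕ) (hk : 1 ≤ k)
    (θ0 : Fin k → EuclideanSpace ℝ (Fin q)) (hθ0inj : Function.Injective θ0)
    (p0 : Fin k → ℝ) (hp0 : ∀ i, 0 < p0 i) (hp0s : ∑ i, p0 i = 1)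
    (ρ : ℝ) (hρ : IsLeast {d : ℝ | ∃ i j, i ≠ j ∧ d = dist (θ0 i) (θ0 j)} ρ)
    (θ : ℕ → Fin k → EuclideanSpace ℝ (Fin q)) (p : ℕ → Fin k → ℝ)
    (hθinj : ∀ n, Function.Injective (θ n))
    (hppos : ∀ n i, 0 < p n i) (hpsum : ∀ n, ∑ i, p n i = 1)
    (hθconv : ∀ i, Filter.Tendsto (fun n => θ n i) Filter.atTop (nhds (θ0 i)))
    (hpconv : ∀ i, Filter.Tendsto (fun n => p n i) Filter.atTop (nhds (p0 i))) :
    ∃ N : ℕ, ∀ n ≥ N,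
      (1 / 2) * min (⨅ l, p0 l) (ρ / 4) *
          (⨅ τ : Equiv.Perm (Fin k), ∑ i, (dist (θ n (τ i)) (θ0 i) + |p n (τ i) - p0 i|)) ≤
        sInf {s : ℝ | ∃ Q : Fin k → Fin k → ℝ,
          (∀ i j, 0 ≤ Q i j) ∧ (∀ i, ∑ j, Q i j = p n i) ∧ (∀ j, ∑ i, Q i j = p0 j) ∧
          s = ∑ i, ∑ j, Q i j * dist (θ n i) (θ0 j)} := by
  obtain ⟨⟨i₀, j₀, hij₀, hρeq⟩, hρlb⟩ := hρ
  have hρpos : 0 < ρ := by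
    rw [hρeq]; exact dist_pos.mpr fun h => hij₀ (hθ0inj h)
  haveI : Nonempty (Fin k) := ⟨⟨0, hk⟩⟩
  set a := ⨅ l, p0 l with ha
  have ha_pos : 0 < a := by
    obtain ⟨i, hi⟩ := Finite.exists_min p0
    exact lt_of_lt_of_le (hp0 i) (le_ciInf hi)
  have ha_le : ∀ i, a ≤ p0 i := fun i => ciInf_le (Set.finite_range p0).bddBelow i
  set c := (1 / 2 : ℝ) * min a (ρ / 4) with hc
  have hc_nonneg : 0 ≤ c := by
    have : 0 < min a (ρ / 4) := lt_min ha_pos (by linarith)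
    rw [hc]; nlinarith
  have hc_le : c ≤ min (a / 2) (ρ / 4) := by
    rcases le_total a (ρ / 4) with h | h
    · rw [hc, min_eq_left h]; exact le_min (by linarith) (by linarith)
    · rw [hc, min_eq_right h]; exact le_min (by linarith) (by linarith)
  have hev : ∀ᶠ n in Filter.atTop, ∀ i : Fin k,
      dist (θ n i) (θ0 i) < ρ / 4 ∧ |p n i - p0 i| < p0 i / 2 := by
    rw [Filter.eventually_all]
    intro i
    have h1 := (hθconv i).eventually (Metric.ball_mem_nhds (θ0 i) (by positivity : (0:ℝ) < ρ / 4))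
    have h2 := (hpconv i).eventually
      (Metric.ball_mem_nhds (p0 i) (by linarith [hp0 i] : (0:ℝ) < p0 i / 2))
    filter_upwards [h1, h2] with n hn1 hn2
    refine ⟨?_, ?_⟩
    · simpa [Metric.mem_ball] using hn1
    · simpa [Metric.mem_ball, Real.dist_eq] using hn2
  obtain ⟨N, hN⟩ := Filter.eventually_atTop.mp hev
  refine ⟨N, fun n hn => ?_⟩
  have hd : ∀ i, dist (θ n i) (θ0 i) < ρ / 4 := fun i => (hN n hn i).1
  have he : ∀ i, |p n i - p0 i| < p0 i / 2 := fun i => (hN n hn i).2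
  have hpn_ge : ∀ i, p0 i / 2 ≤ p n i := by
    intro i
    have h := abs_lt.mp (he i)
    linarith [h.1, h.2]
  have hne : Set.Nonempty {s : ℝ | ∃ Q : Fin k → Fin k → ℝ,
      (∀ i j, 0 ≤ Q i j) ∧ (∀ i, ∑ j, Q i j = p n i) ∧ (∀ j, ∑ i, Q i j = p0 j) ∧
      s = ∑ i, ∑ j, Q i j * dist (θ n i) (θ0 j)} := by
    refine ⟨_, fun i j => p n i * p0 j, fun i j => ?_, fun i => ?_, fun j => ?_, rfl⟩
    · exact mul_nonneg (hppos n i).le (hp0 j).le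
    · rw [← Finset.mul_sum, hp0s, mul_one]
    · rw [← Finset.sum_mul, hpsum n, one_mul]
  refine le_csInf hne ?_
  rintro s ⟨Q, hQ0, hQrow, hQcol, rfl⟩
  have hinf_le : (⨅ τ : Equiv.Perm (Fin k),
      ∑ i, (dist (θ n (τ i)) (θ0 i) + |p n (τ i) - p0 i|))
      ≤ ∑ i, (dist (θ n i) (θ0 i) + |p n i - p0 i|) := by
    have hb : BddBelow (Set.range fun τ : Equiv.Perm (Fin k) =>
        ∑ i, (dist (θ n (τ i)) (θ0 i) + |p n (τ i) - p0 i|)) :=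
      (Set.finite_range _).bddBelow
    simpa using ciInf_le hb (Equiv.refl (Fin k))
  have hQdiag_le_row : ∀ i, Q i i ≤ p n i := fun i => by
    rw [← hQrow i]
    exact Finset.single_le_sum (fun j _ => hQ0 i j) (Finset.mem_univ i)
  have hQdiag_le_col : ∀ i, Q i i ≤ p0 i := fun i => by
    rw [← hQcol i]
    exact Finset.single_le_sum (fun j _ => hQ0 j i) (Finset.mem_univ i)
  have hrow_off : ∀ i, ∑ j, (if i = j then 0 else Q i j) = p n i - Q i i := by
    intro i
    have h : (∑ j, (if i = j then (0:ℝ) else Q i j))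
        = (∑ j, Q i j) - ∑ j, (if i = j then Q i j else 0) := by
      rw [← Finset.sum_sub_distrib]
      exact Finset.sum_congr rfl fun j _ => by by_cases h : i = j <;> simp [h]
    rw [h, hQrow i, Finset.sum_ite_eq]
    simp
  have hcol_off : ∀ j, ∑ i, (if i = j then 0 else Q i j) = p0 j - Q j j := by
    intro j
    have h : (∑ i, (if i = j then (0:ℝ) else Q i j))
        = (∑ i, Q i j) - ∑ i, (if i = j then Q i j else 0) := by
      rw [← Finset.sum_sub_distrib]
      exact Finset.sum_congr rfl fun i _ => by by_cases h : i = j <;> simp [h]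
    rw [h, hQcol j, Finset.sum_ite_eq']
    simp
  set M := ∑ i, ∑ j, (if i = j then (0:ℝ) else Q i j) with hM
  have hM_row : M = ∑ i, (p n i - Q i i) :=
    Finset.sum_congr rfl fun i _ => hrow_off i
  have hM_col : M = ∑ j, (p0 j - Q j j) := by
    rw [hM, Finset.sum_comm]
    exact Finset.sum_congr rfl fun j _ => hcol_off j
  have he_le : ∑ i, |p n i - p0 i| ≤ 2 * M := by
    have h1 : ∀ i, |p n i - p0 i| ≤ (p n i - Q i i) + (p0 i - Q i i) := by
      intro i
      refine abs_le.mpr ⟨by linarith [hQdiag_le_row i], by linarith [hQdiag_le_col i]⟩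
    calc ∑ i, |p n i - p0 i| ≤ ∑ i, ((p n i - Q i i) + (p0 i - Q i i)) :=
          Finset.sum_le_sum fun i _ => h1 i
      _ = (∑ i, (p n i - Q i i)) + ∑ i, (p0 i - Q i i) := Finset.sum_add_distrib
      _ = 2 * M := by rw [← hM_row, ← hM_col]; ring
  have hstep : ∑ i, ∑ j, Q i j * (dist (θ n i) (θ0 i) + (if i = j then 0 else ρ / 2))
      ≤ ∑ i, ∑ j, Q i j * dist (θ n i) (θ0 j) := by
    refine Finset.sum_le_sum fun i _ => Finset.sum_le_sum fun j _ => ?_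
    by_cases h : i = j
    · subst h; simp
    · refine mul_le_mul_of_nonneg_left ?_ (hQ0 i j)
      have h1 : ρ ≤ dist (θ0 i) (θ0 j) := hρlb ⟨i, j, h, rfl⟩
      have h2 : dist (θ0 i) (θ0 j) ≤ dist (θ0 i) (θ n i) + dist (θ n i) (θ0 j) :=
        dist_triangle _ _ _
      have h3 := hd i
      rw [if_neg h]
      rw [dist_comm (θ0 i) (θ n i)] at h2
      linarith
  have hsplit : ∑ i, ∑ j, Q i j * (dist (θ n i) (θ0 i) + (if i = j then 0 else ρ / 2))
      = (∑ i, p n i * dist (θ n i) (θ0 i)) + (ρ / 2) * M := by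
    have hpt : ∀ i j, Q i j * (dist (θ n i) (θ0 i) + (if i = j then 0 else ρ / 2))
        = Q i j * dist (θ n i) (θ0 i) + (ρ / 2) * (if i = j then 0 else Q i j) := by
      intro i j; by_cases h : i = j <;> simp [h] <;> ring
    calc ∑ i, ∑ j, Q i j * (dist (θ n i) (θ0 i) + (if i = j then 0 else ρ / 2))
        = ∑ i, ∑ j, (Q i j * dist (θ n i) (θ0 i) + (ρ / 2) * (if i = j then 0 else Q i j)) :=
          Finset.sum_congr rfl fun i _ => Finset.sum_congr rfl fun j _ => hpt i j
      _ = ∑ i, ((∑ j, Q i j) * dist (θ n i) (θ0 i)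
            + (ρ / 2) * ∑ j, (if i = j then 0 else Q i j)) := by
          refine Finset.sum_congr rfl fun i _ => ?_
          rw [Finset.sum_add_distrib, ← Finset.sum_mul, ← Finset.mul_sum]
      _ = (∑ i, p n i * dist (θ n i) (θ0 i)) + (ρ / 2) * M := by
          rw [Finset.sum_add_distrib, ← Finset.mul_sum]
          congr 1
          exact Finset.sum_congr rfl fun i _ => by rw [hQrow i]
  have hlow1 : min (a / 2) (ρ / 4) * ∑ i, dist (θ n i) (θ0 i)
      ≤ ∑ i, p n i * dist (θ n i) (θ0 i) := by
    rw [Finset.mul_sum]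
    refine Finset.sum_le_sum fun i _ => ?_
    refine mul_le_mul_of_nonneg_right ?_ dist_nonneg
    calc min (a / 2) (ρ / 4) ≤ a / 2 := min_le_left _ _
      _ ≤ p0 i / 2 := by linarith [ha_le i]
      _ ≤ p n i := hpn_ge i
  have hlow2 : min (a / 2) (ρ / 4) * ∑ i, |p n i - p0 i| ≤ (ρ / 2) * M := by
    calc min (a / 2) (ρ / 4) * ∑ i, |p n i - p0 i|
        ≤ (ρ / 4) * ∑ i, |p n i - p0 i| :=
          mul_le_mul_of_nonneg_right (min_le_right _ _)
            (Finset.sum_nonneg fun i _ => abs_nonneg _)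
      _ ≤ (ρ / 4) * (2 * M) := mul_le_mul_of_nonneg_left he_le (by linarith)
      _ = (ρ / 2) * M := by ring
  have hS_nonneg : 0 ≤ ∑ i, (dist (θ n i) (θ0 i) + |p n i - p0 i|) :=
    Finset.sum_nonneg fun i _ => add_nonneg dist_nonneg (abs_nonneg _)
  calc c * (⨅ τ : Equiv.Perm (Fin k),
        ∑ i, (dist (θ n (τ i)) (θ0 i) + |p n (τ i) - p0 i|))
      ≤ c * ∑ i, (dist (θ n i) (θ0 i) + |p n i - p0 i|) :=
        mul_le_mul_of_nonneg_left hinf_le hc_nonneg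
    _ ≤ min (a / 2) (ρ / 4) * ∑ i, (dist (θ n i) (θ0 i) + |p n i - p0 i|) :=
        mul_le_mul_of_nonneg_right hc_le hS_nonneg
    _ = min (a / 2) (ρ / 4) * ∑ i, dist (θ n i) (θ0 i)
        + min (a / 2) (ρ / 4) * ∑ i, |p n i - p0 i| := by
        rw [Finset.sum_add_distrib]; ring
    _ ≤ (∑ i, p n i * dist (θ n i) (θ0 i)) + (ρ / 2) * M := add_le_add hlow1 hlow2
    _ = ∑ i, ∑ j, Q i j * (dist (θ n i) (θ0 i) + (if i = j then 0 else ρ / 2)) := hsplit.symm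
    _ ≤ ∑ i, ∑ j, Q i j * dist (θ n i) (θ0 j) := hstep
end

section
/- Let $\{P_\theta\}_{\theta \in \Theta}$ be any family of probability measures on a measurable space $(\mathfrak{X},\mathcal{A})$, and let $k_0 \geq 2$. Fix $G_0 = \sum_{i=1}^{k_0} p_i^0 \delta_{\theta_i^0} \in \mathcal{E}_{k_0}(\Theta)$. Then for any $N \geq 1$, $\liminf_{G \overset{W_1}{\to} G_0,\, G \in \mathcal{E}_{k_0}(\Theta)} \frac{V(P_{G,N}, P_{G_0,N})}{D_1(G,G_0)} \leq \frac{1}{2}$, where $V$ is the total variation distance. -/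
open MeasureTheory
open scoped BigOperators ENNReal

/-- Total variation distance between two measures. -/
noncomputable def tvDist {Y : Type*} [MeasurableSpace Y] (P Q : Measure Y) : ℝ :=
  ⨆ A : {s : Set Y // MeasurableSet s}, |(P A.1).toReal - (Q A.1).toReal|

/-- Mixture of `N`-fold product measures `P_{G,N} = ∑ pᵢ ⊗^N P_{θᵢ}`. -/
noncomputable def mixProd {X : Type*} [MeasurableSpace X] {q k : ℕ}
    (P : EuclideanSpace ℝ (Fin q) → Measure X) [∀ ϑ, IsProbabilityMeasure (P ϑ)]
    (θ : Fin k → EuclideanSpace ℝ (Fin q)) (p : Fin k → ℝ) (N : ℕ) :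
    Measure (Fin N → X) :=
  ∑ i, ENNReal.ofReal (p i) • (Measure.pi fun _ : Fin N => P (θ i))

set_option maxHeartbeats 1000000 in
/-- For any kernel family, any `k₀ ≥ 2`, any `G₀ ∈ 𝓔_{k₀}(Θ)` and any `N ≥ 1`, the
liminf of `V(P_{G,N}, P_{G₀,N}) / D₁(G,G₀)` as `G → G₀` in `W₁` within `𝓔_{k₀}(Θ)`
is at most `1/2`. -/
theorem stmt_3 {X : Type*} [MeasurableSpace X] (q k0 : ℕ) (hk0 : 2 ≤ k0)
    (Θ : Set (EuclideanSpace ℝ (Fin q)))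
    (P : EuclideanSpace ℝ (Fin q) → Measure X) [∀ ϑ, IsProbabilityMeasure (P ϑ)]
    (θ0 : Fin k0 → EuclideanSpace ℝ (Fin q)) (hθ0mem : ∀ i, θ0 i ∈ Θ)
    (hθ0inj : Function.Injective θ0)
    (p0 : Fin k0 → ℝ) (hp0 : ∀ i, 0 < p0 i) (hp0s : ∑ i, p0 i = 1)
    (N : ℕ) (hN : 1 ≤ N) (δ ε : ℝ) (hδ : 0 < δ) (hε : 0 < ε) :
    ∃ (θ : Fin k0 → EuclideanSpace ℝ (Fin q)) (p : Fin k0 → ℝ),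
      (∀ i, θ i ∈ Θ) ∧ Function.Injective θ ∧ (∀ i, 0 < p i) ∧ (∑ i, p i = 1) ∧
      0 < (⨅ τ : Equiv.Perm (Fin k0), ∑ i, (dist (θ (τ i)) (θ0 i) + |p (τ i) - p0 i|)) ∧
      sInf {s : ℝ | ∃ Q : Fin k0 → Fin k0 → ℝ,
          (∀ i j, 0 ≤ Q i j) ∧ (∀ i, ∑ j, Q i j = p i) ∧ (∀ j, ∑ i, Q i j = p0 j) ∧
          s = ∑ i, ∑ j, Q i j * dist (θ i) (θ0 j)} < δ ∧
      tvDist (mixProd P θ p N) (mixProd P θ0 p0 N) ≤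
        (1 / 2 + ε) *
          (⨅ τ : Equiv.Perm (Fin k0), ∑ i, (dist (θ (τ i)) (θ0 i) + |p (τ i) - p0 i|)) := by
  classical
  have h0 : (0 : ℕ) < k0 := by omega
  have h1 : (1 : ℕ) < k0 := by omega
  set i0 : Fin k0 := ⟨0, h0⟩ with hi0def
  set i1 : Fin k0 := ⟨1, h1⟩ with hi1def
  have hne : i0 ≠ i1 := by
    simp [hi0def, hi1def, Fin.ext_iff]
  have hD0 : 0 < dist (θ0 i0) (θ0 i1) := dist_pos.2 fun h => hne (hθ0inj h)
  set D : ℝ := dist (θ0 i0) (θ0 i1) with hDdef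
  -- minimal pairwise distance
  set S : Finset (Fin k0 × Fin k0) := Finset.univ.filter (fun ij => ij.1 ≠ ij.2) with hSdef
  have hSne : S.Nonempty := ⟨(i0, i1), by simp [hSdef, hne]⟩
  obtain ⟨ab, habS, hminS⟩ :=
    S.exists_min_image (fun ij => dist (θ0 ij.1) (θ0 ij.2)) hSne
  set dmin : ℝ := dist (θ0 ab.1) (θ0 ab.2) with hdmindef
  have habne : ab.1 ≠ ab.2 := by simpa [hSdef] using habS
  have hdminpos : 0 < dmin :=
    dist_pos.2 fun h => habne (hθ0inj h)
  -- the perturbation size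
  set t : ℝ := min (min (p0 i1 / 2) (dmin / 2)) (δ / (2 * (D + 1))) with htdef
  have ht0 : 0 < t := by
    have := hp0 i1
    apply lt_min (lt_min (by linarith) (by linarith))
    positivity
  have htp : t < p0 i1 := by
    have h2 : t ≤ p0 i1 / 2 := (min_le_left _ _).trans (min_le_left _ _)
    linarith [hp0 i1]
  have htd : 2 * t ≤ dmin := by
    have h2 : t ≤ dmin / 2 := (min_le_left _ _).trans (min_le_right _ _)
    linarith
  have htδ : t * D < δ := by
    have h2 : t ≤ δ / (2 * (D + 1)) := min_le_right _ _
    have hD1 : 0 < D + 1 := by linarith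
    have : t * D ≤ (δ / (2 * (D + 1))) * D := by
      apply mul_le_mul_of_nonneg_right h2 hD0.le
    have hlt : (δ / (2 * (D + 1))) * D < δ := by
      rw [div_mul_eq_mul_div, div_lt_iff₀ (by linarith)]
      nlinarith
    linarith
  -- the perturbed weights
  set p : Fin k0 → ℝ := fun i => p0 i + (if i = i0 then t else 0) - (if i = i1 then t else 0)
    with hpdef
  have hdiff : ∀ i, p i - p0 i = (if i = i0 then t else 0) - (if i = i1 then t else 0) := by
    intro i; simp only [hpdef]; ring
  have hppos : ∀ i, 0 < p i := by
    intro i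
    simp only [hpdef]
    split_ifs with h h' h'
    · exact absurd (h.symm.trans h') hne
    · have := hp0 i; linarith
    · rw [h']; linarith
    · have := hp0 i; linarith
  have hpsum : ∑ i, p i = 1 := by
    simp only [hpdef]
    rw [Finset.sum_sub_distrib, Finset.sum_add_distrib, hp0s]
    rw [Finset.sum_ite_eq' Finset.univ i0 (fun _ => t),
        Finset.sum_ite_eq' Finset.univ i1 (fun _ => t)]
    simp
  have habs : ∀ i, |p i - p0 i| = (if i = i0 then t else 0) + (if i = i1 then t else 0) := by
    intro i
    rw [hdiff]
    split_ifs with h h' h'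
    · exact absurd (h.symm.trans h') hne
    · rw [sub_zero, add_zero, abs_of_nonneg ht0.le]
    · rw [zero_sub, abs_neg, zero_add, abs_of_nonneg ht0.le]
    · simp
  have habs_sum : ∑ i, |p i - p0 i| = 2 * t := by
    simp only [habs]
    rw [Finset.sum_add_distrib,
        Finset.sum_ite_eq' Finset.univ i0 (fun _ => t),
        Finset.sum_ite_eq' Finset.univ i1 (fun _ => t)]
    simp; ring
  -- lower bound for the infimum over permutations
  have hinf_ge : 2 * t ≤
      ⨅ τ : Equiv.Perm (Fin k0), ∑ i, (dist (θ0 (τ i)) (θ0 i) + |p (τ i) - p0 i|) := by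
    apply le_ciInf
    intro τ
    by_cases hτ : τ = 1
    · subst hτ
      simp only [Equiv.Perm.coe_one, id_eq]
      rw [show (∑ i, (dist (θ0 i) (θ0 i) + |p i - p0 i|)) = ∑ i, |p i - p0 i| by
        simp [dist_self]]
      rw [habs_sum]
    · obtain ⟨i, hi⟩ : ∃ i, τ i ≠ i := by
        by_contra h
        push_neg at h
        exact hτ (Equiv.ext h)
      have hmem : (τ i, i) ∈ S := by simp [hSdef, hi]
      have hle : dmin ≤ dist (θ0 (τ i)) (θ0 i) := hminS (τ i, i) hmem
      have hsingle : dist (θ0 (τ i)) (θ0 i) + |p (τ i) - p0 i| ≤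
          ∑ j, (dist (θ0 (τ j)) (θ0 j) + |p (τ j) - p0 j|) :=
        Finset.single_le_sum (f := fun j => dist (θ0 (τ j)) (θ0 j) + |p (τ j) - p0 j|)
          (fun j _ => add_nonneg dist_nonneg (abs_nonneg _)) (Finset.mem_univ i)
      have := abs_nonneg (p (τ i) - p0 i)
      linarith
  have hinf_pos : 0 <
      ⨅ τ : Equiv.Perm (Fin k0), ∑ i, (dist (θ0 (τ i)) (θ0 i) + |p (τ i) - p0 i|) :=
    lt_of_lt_of_le (by linarith) hinf_ge
  -- the coupling
  set Q : Fin k0 → Fin k0 → ℝ := fun i j =>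
    (if i = j then (if i = i1 then p0 i - t else p0 i) else 0) +
      (if i = i0 ∧ j = i1 then t else 0) with hQdef
  have hQnn : ∀ i j, 0 ≤ Q i j := by
    intro i j
    apply add_nonneg
    · split_ifs with h h'
      · subst h'; linarith
      · exact (hp0 i).le
      · exact le_refl 0
    · split_ifs
      · exact ht0.le
      · exact le_refl 0
  have hrow : ∀ i, ∑ j, Q i j = p i := by
    intro i
    simp only [hQdef]
    rw [Finset.sum_add_distrib]
    have e1 : ∑ j, (if i = j then (if i = i1 then p0 i - t else p0 i) else 0) =
        (if i = i1 then p0 i - t else p0 i) := by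
      rw [Finset.sum_ite_eq Finset.univ i (fun _ => if i = i1 then p0 i - t else p0 i)]
      simp
    have e2 : ∑ j, (if i = i0 ∧ j = i1 then t else 0) = (if i = i0 then t else 0) := by
      by_cases h : i = i0
      · simp only [h, true_and]
        rw [Finset.sum_ite_eq' Finset.univ i1 (fun _ => t)]
        simp
      · simp [h]
    rw [e1, e2]
    simp only [hpdef]
    split_ifs <;> ring
  have hcol : ∀ j, ∑ i, Q i j = p0 j := by
    intro j
    simp only [hQdef]
    rw [Finset.sum_add_distrib]
    have e1 : ∑ i, (if i = j then (if i = i1 then p0 i - t else p0 i) else 0) =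
        (if j = i1 then p0 j - t else p0 j) := by
      rw [Finset.sum_ite_eq' Finset.univ j (fun i => if i = i1 then p0 i - t else p0 i)]
      simp
    have e2 : ∑ i, (if i = i0 ∧ j = i1 then t else 0) = (if j = i1 then t else 0) := by
      by_cases h : j = i1
      · simp only [h, and_true]
        rw [Finset.sum_ite_eq' Finset.univ i0 (fun _ => t)]
        simp
      · simp [h]
    rw [e1, e2]
    split_ifs <;> ring
  have hcost : ∑ i, ∑ j, Q i j * dist (θ0 i) (θ0 j) = t * D := by
    have key : ∀ i j, Q i j * dist (θ0 i) (θ0 j) =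
        if i = i0 ∧ j = i1 then t * D else 0 := by
      intro i j
      simp only [hQdef]
      by_cases h2 : i = i0 ∧ j = i1
      · obtain ⟨ha, hb⟩ := h2
        subst ha; subst hb
        rw [if_pos (⟨rfl, rfl⟩ : i0 = i0 ∧ i1 = i1),
            if_pos (⟨rfl, rfl⟩ : i0 = i0 ∧ i1 = i1), if_neg hne, zero_add, hDdef]
      · rw [if_neg h2, if_neg h2, add_zero]
        by_cases h : i = j
        · subst h
          simp [dist_self]
        · rw [if_neg h, zero_mul]
    simp only [key]
    rw [show (∑ i, ∑ j, if i = i0 ∧ j = i1 then t * D else 0) =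
        ∑ i, (if i = i0 then t * D else 0) from ?_]
    · rw [Finset.sum_ite_eq' Finset.univ i0 (fun _ => t * D)]; simp
    · apply Finset.sum_congr rfl
      intro i _
      by_cases h : i = i0
      · simp only [h, true_and]
        rw [Finset.sum_ite_eq' Finset.univ i1 (fun _ => t * D)]
        simp
      · simp [h]
  have hsinf : sInf {s : ℝ | ∃ Q' : Fin k0 → Fin k0 → ℝ,
      (∀ i j, 0 ≤ Q' i j) ∧ (∀ i, ∑ j, Q' i j = p i) ∧ (∀ j, ∑ i, Q' i j = p0 j) ∧
      s = ∑ i, ∑ j, Q' i j * dist (θ0 i) (θ0 j)} < δ := by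
    have hbdd : BddBelow {s : ℝ | ∃ Q' : Fin k0 → Fin k0 → ℝ,
        (∀ i j, 0 ≤ Q' i j) ∧ (∀ i, ∑ j, Q' i j = p i) ∧ (∀ j, ∑ i, Q' i j = p0 j) ∧
        s = ∑ i, ∑ j, Q' i j * dist (θ0 i) (θ0 j)} := by
      refine ⟨0, ?_⟩
      rintro s ⟨Q', hQ'nn, -, -, rfl⟩
      apply Finset.sum_nonneg
      intro i _
      apply Finset.sum_nonneg
      intro j _
      exact mul_nonneg (hQ'nn i j) dist_nonneg
    have hmem : t * D ∈ {s : ℝ | ∃ Q' : Fin k0 → Fin k0 → ℝ,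
        (∀ i j, 0 ≤ Q' i j) ∧ (∀ i, ∑ j, Q' i j = p i) ∧ (∀ j, ∑ i, Q' i j = p0 j) ∧
        s = ∑ i, ∑ j, Q' i j * dist (θ0 i) (θ0 j)} :=
      ⟨Q, hQnn, hrow, hcol, hcost.symm⟩
    exact lt_of_le_of_lt (csInf_le hbdd hmem) htδ
  -- total variation bound
  have htv : tvDist (mixProd P θ0 p N) (mixProd P θ0 p0 N) ≤ t := by
    haveI : Nonempty {s : Set (Fin N → X) // MeasurableSet s} :=
      ⟨⟨∅, MeasurableSet.empty⟩⟩
    apply ciSup_le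
    intro A
    set μ : Fin k0 → Measure (Fin N → X) := fun i => Measure.pi fun _ : Fin N => P (θ0 i)
      with hμdef
    have hμprob : ∀ i, IsProbabilityMeasure (μ i) := fun i => by
      rw [hμdef]; infer_instance
    set a : Fin k0 → ℝ := fun i => (μ i A.1).toReal with hadef
    have ha0 : ∀ i, 0 ≤ a i := fun i => ENNReal.toReal_nonneg
    have ha1 : ∀ i, a i ≤ 1 := by
      intro i
      have := hμprob i
      have hle : μ i A.1 ≤ 1 := prob_le_one
      calc a i ≤ (1 : ℝ≥0∞).toReal := ENNReal.toReal_mono (by simp) hle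
        _ = 1 := by simp
    have happ : ∀ (r : Fin k0 → ℝ), (∀ i, 0 ≤ r i) →
        ((mixProd P θ0 r N) A.1).toReal = ∑ i, r i * a i := by
      intro r hr
      rw [mixProd]
      rw [Measure.finset_sum_apply]
      rw [ENNReal.toReal_sum]
      · apply Finset.sum_congr rfl
        intro i _
        rw [Measure.smul_apply, smul_eq_mul, ENNReal.toReal_mul,
            ENNReal.toReal_ofReal (hr i)]
      · intro i _
        rw [Measure.smul_apply, smul_eq_mul]
        exact ENNReal.mul_ne_top ENNReal.ofReal_ne_top (measure_ne_top _ _)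
    rw [happ p (fun i => (hppos i).le), happ p0 (fun i => (hp0 i).le)]
    have hsum : ∑ i, p i * a i - ∑ i, p0 i * a i = t * a i0 - t * a i1 := by
      rw [← Finset.sum_sub_distrib]
      have e : ∀ i, p i * a i - p0 i * a i =
          (if i = i0 then t * a i else 0) - (if i = i1 then t * a i else 0) := by
        intro i
        have : p i * a i - p0 i * a i = (p i - p0 i) * a i := by ring
        rw [this, hdiff i]
        split_ifs <;> ring
      simp only [e]
      rw [Finset.sum_sub_distrib,
          Finset.sum_ite_eq' Finset.univ i0 (fun i => t * a i),
          Finset.sum_ite_eq' Finset.univ i1 (fun i => t * a i)]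
      simp
    rw [hsum]
    rw [abs_le]
    constructor
    · nlinarith [ha0 i0, ha0 i1, ha1 i0, ha1 i1]
    · nlinarith [ha0 i0, ha0 i1, ha1 i0, ha1 i1]
  refine ⟨θ0, p, hθ0mem, hθ0inj, hppos, hpsum, hinf_pos, hsinf, ?_⟩
  have hfinal : (1 / 2 + ε) *
      (⨅ τ : Equiv.Perm (Fin k0), ∑ i, (dist (θ0 (τ i)) (θ0 i) + |p (τ i) - p0 i|)) ≥ t := by
    nlinarith [hinf_ge, hinf_pos]
  linarith [htv]
end

section
/- Let $\{P_\theta\}_{\theta \in \Theta}$ be a family of probability measures on $(\mathfrak{X},\mathcal{A})$. For any $G = \sum_{i=1}^{k_0} p_i \delta_{\theta_i}$ and $G' = \sum_{i=1}^{k_0} p'_i \delta_{\theta'_i}$ in $\mathcal{E}_{k_0}(\Theta)$ and any $N \geq 1$, the Hellinger distance between the mixtures of $N$-product distributions satisfies $h(P_{G,N}, P_{G',N}) \leq \min_{\tau \in S_{k_0}} \left( \sqrt{N} \max_{1 \leq i \leq k_0} h(P_{\theta_i}, P_{\theta'_{\tau(i)}}) + \sqrt{\frac{1}{2}\sum_{i=1}^{k_0}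 |p_i - p'_{\tau(i)}|} \right)$. -/
/-!
Write `√p_μ` for the square root of the density of `P` with respect to a dominating measure `μ`.
Then `√2 · h(P, Q)` is the `L²(μ)` distance between `√p_μ` and `√q_μ`, whatever `μ` is, so `h`
satisfies the triangle inequality. Fix `τ` and pass through the intermediate mixture
`∑ᵢ pᵢ P_{θ'_{τ(i)}}^{⊗N}`. Between the two mixtures with the same weights, joint convexity of `h²`
(Cauchy–Schwarz on the square-root densities) reduces the bound to the components. There the
Bhattacharyya coefficient `1 - h²` is multiplicative over products, and Bernoulli's inequality
gives `h²(P^{⊗N}, Q^{⊗N}) = 1 - (1 - h²(P, Q))^N ≤ N h²(P, Q)`. Between the two mixtures with the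
same components, `(√a - √b)² ≤ |a - b|` bounds `h²` by half the `ℓ¹` distance of the weights.
-/

open MeasureTheory
open scoped BigOperators ENNReal

/-- Hellinger distance between two measures (densities taken w.r.t. `P + Q`). -/
noncomputable def hellD {Y : Type*} [MeasurableSpace Y] (P Q : Measure Y) : ℝ :=
  Real.sqrt ((1 / 2) * ∫ x, (Real.sqrt ((P.rnDeriv (P + Q) x).toReal)
      - Real.sqrt ((Q.rnDeriv (P + Q) x).toReal)) ^ 2 ∂(P + Q))

namespace MeasureTheory

theorem lintegral_fin_nat_prod_eq_prod {X : Type*} [MeasurableSpace X] {n : ℕ}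
    {μ : Fin n → Measure X} [∀ i, SigmaFinite (μ i)] {f : Fin n → X → ℝ≥0∞}
    (hf : ∀ i, Measurable (f i)) :
    ∫⁻ x, ∏ i, f i (x i) ∂Measure.pi μ = ∏ i, ∫⁻ y, f i y ∂μ i := by
  induction n with
  | zero => simp
  | succ n ih =>
    calc ∫⁻ x, ∏ i, f i (x i) ∂Measure.pi μ
        = ∫⁻ z : X × (Fin n → X), f 0 z.1 * ∏ i : Fin n, f i.succ (z.2 i)
            ∂(μ 0).prod (Measure.pi fun i => μ i.succ) := by
          rw [← (measurePreserving_piFinSuccAbove μ 0).symm.lintegral_comp_emb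
            (MeasurableEquiv.measurableEmbedding _)]
          simp_rw [MeasurableEquiv.piFinSuccAbove_symm_apply, Fin.insertNthEquiv,
            Fin.prod_univ_succ, Fin.insertNth_zero, Equiv.coe_fn_mk, Fin.cons_succ,
            Fin.zero_succAbove, cast_eq, Fin.cons_zero]
      _ = (∫⁻ y, f 0 y ∂μ 0) * ∏ i : Fin n, ∫⁻ y, f i.succ y ∂μ i.succ := by
          rw [← ih fun i => hf i.succ]
          exact lintegral_prod_mul (hf 0).aemeasurable
            (Finset.measurable_prod _ fun (i : Fin n) _ =>
              (hf i.succ).comp (measurable_pi_apply i)).aemeasurable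
      _ = ∏ i, ∫⁻ y, f i y ∂μ i := (Fin.prod_univ_succ fun i => ∫⁻ y, f i y ∂μ i).symm

theorem Measure.pi_eq_withDensity_rnDeriv {X : Type*} [MeasurableSpace X] {n : ℕ}
    {ν μ : Fin n → Measure X} [∀ i, SigmaFinite (ν i)] [∀ i, SigmaFinite (μ i)]
    (h : ∀ i, ν i ≪ μ i) :
    Measure.pi ν = (Measure.pi μ).withDensity fun x => ∏ i, (ν i).rnDeriv (μ i) (x i) := by
  refine Measure.pi_eq fun s hs => ?_
  have hind : (Set.univ.pi s).indicator (fun x => ∏ i, (ν i).rnDeriv (μ i) (x i))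
      = fun x => ∏ i, (s i).indicator ((ν i).rnDeriv (μ i)) (x i) := by
    ext x
    by_cases hx : x ∈ Set.univ.pi s
    · simp [Set.indicator_of_mem hx, Set.indicator_of_mem (hx _ (Set.mem_univ _))]
    · obtain ⟨i, hi⟩ : ∃ i, x i ∉ s i := by simpa [Set.mem_univ_pi] using hx
      rw [Set.indicator_of_notMem hx, eq_comm]
      exact Finset.prod_eq_zero (Finset.mem_univ i) (Set.indicator_of_notMem hi _)
  rw [withDensity_apply _ (.univ_pi hs), ← lintegral_indicator (.univ_pi hs), hind,
    lintegral_fin_nat_prod_eq_prod fun i => (Measure.measurable_rnDeriv _ _).indicator (hs i)]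
  refine Finset.prod_congr rfl fun i _ => ?_
  rw [lintegral_indicator (hs i), Measure.setLIntegral_rnDeriv' (h i) (hs i)]

variable {Y ι : Type*} [MeasurableSpace Y]

theorem Measure.rnDeriv_finset_sum (s : Finset ι) (ν : ι → Measure Y)
    [∀ i, IsFiniteMeasure (ν i)] (μ : Measure Y) [SigmaFinite μ] :
    (∑ i ∈ s, ν i).rnDeriv μ =ᵐ[μ] ∑ i ∈ s, (ν i).rnDeriv μ := by
  classical
  induction s using Finset.induction_on with
  | empty => simp
  | insert a s ha ih =>
    simp only [Finset.sum_insert ha]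
    filter_upwards [Measure.rnDeriv_add' (ν a) (∑ i ∈ s, ν i) μ, ih] with x hx hsx
    rw [hx, Pi.add_apply, hsx, Pi.add_apply]

theorem Measure.absolutelyContinuous_finset_sum_right [Fintype ι] (ν : ι → Measure Y) (i : ι) :
    ν i ≪ ∑ j, ν j := by
  rw [← Measure.sum_fintype]
  exact Measure.absolutelyContinuous_sum_right i .rfl

instance isFiniteMeasure_ofReal_smul (c : ℝ) (μ : Measure Y) [IsFiniteMeasure μ] :
    IsFiniteMeasure (ENNReal.ofReal c • μ) :=
  μ.smul_finite ENNReal.ofReal_ne_top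

end MeasureTheory

lemma sq_sqrt_sum_mul_sub_sqrt_sum_mul_le {ι : Type*} (s : Finset ι) {p a b : ι → ℝ}
    (hp : ∀ i, 0 ≤ p i) (ha : ∀ i, 0 ≤ a i) (hb : ∀ i, 0 ≤ b i) :
    (√(∑ i ∈ s, p i * a i) - √(∑ i ∈ s, p i * b i)) ^ 2
      ≤ ∑ i ∈ s, p i * (√(a i) - √(b i)) ^ 2 := by
  have hA : 0 ≤ ∑ i ∈ s, p i * a i := Finset.sum_nonneg fun i _ => mul_nonneg (hp i) (ha i)
  have hB : 0 ≤ ∑ i ∈ s, p i * b i := Finset.sum_nonneg fun i _ => mul_nonneg (hp i) (hb i)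
  have hcauchy : ∑ i ∈ s, p i * (√(a i) * √(b i))
      ≤ √(∑ i ∈ s, p i * a i) * √(∑ i ∈ s, p i * b i) :=
    calc ∑ i ∈ s, p i * (√(a i) * √(b i)) = ∑ i ∈ s, √(p i * a i) * √(p i * b i) :=
          Finset.sum_congr rfl fun i _ => by
            rw [Real.sqrt_mul (hp i), Real.sqrt_mul (hp i), mul_mul_mul_comm,
              Real.mul_self_sqrt (hp i)]
      _ ≤ _ := Real.sum_sqrt_mul_sqrt_le s (fun i => mul_nonneg (hp i) (ha i))
          (fun i => mul_nonneg (hp i) (hb i))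
  have hexpand : ∑ i ∈ s, p i * (√(a i) - √(b i)) ^ 2
      = ∑ i ∈ s, p i * a i + ∑ i ∈ s, p i * b i - 2 * ∑ i ∈ s, p i * (√(a i) * √(b i)) := by
    rw [← Finset.sum_add_distrib, Finset.mul_sum, ← Finset.sum_sub_distrib]
    refine Finset.sum_congr rfl fun i _ => ?_
    rw [sub_sq, Real.sq_sqrt (ha i), Real.sq_sqrt (hb i)]
    ring
  rw [sub_sq, Real.sq_sqrt hA, Real.sq_sqrt hB, hexpand]
  linarith

lemma sq_sqrt_sub_sqrt_le_abs {x y : ℝ} (hx : 0 ≤ x) (hy : 0 ≤ y) :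
    (√x - √y) ^ 2 ≤ |x - y| := by
  have hfactor : |x - y| = |√x - √y| * (√x + √y) := by
    rw [← Real.sq_sqrt hx, ← Real.sq_sqrt hy, sq_sub_sq, abs_mul,
      abs_of_nonneg (by positivity : 0 ≤ √x + √y), mul_comm]
    simp
  have hx' := Real.sqrt_nonneg x
  have hy' := Real.sqrt_nonneg y
  calc (√x - √y) ^ 2 = |√x - √y| * |√x - √y| := by rw [← sq_abs, sq]
    _ ≤ |√x - √y| * (√x + √y) :=
        mul_le_mul_of_nonneg_left (abs_sub_le_iff.2 ⟨by linarith, by linarith⟩) (abs_nonneg _)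
    _ = |x - y| := hfactor.symm

section SqrtRnDeriv

variable {Y : Type*} [MeasurableSpace Y]

noncomputable def sqrtRnDeriv (P μ : Measure Y) (x : Y) : ℝ := √((P.rnDeriv μ x).toReal)

lemma measurable_sqrtRnDeriv (P μ : Measure Y) : Measurable (sqrtRnDeriv P μ) :=
  (Measure.measurable_rnDeriv P μ).ennreal_toReal.sqrt

lemma sqrtRnDeriv_nonneg (P μ : Measure Y) (x : Y) : 0 ≤ sqrtRnDeriv P μ x := Real.sqrt_nonneg _

lemma sq_sqrtRnDeriv (P μ : Measure Y) (x : Y) : sqrtRnDeriv P μ x ^ 2 = (P.rnDeriv μ x).toReal :=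
  Real.sq_sqrt ENNReal.toReal_nonneg

lemma memLp_sqrtRnDeriv (P μ : Measure Y) [IsFiniteMeasure P] : MemLp (sqrtRnDeriv P μ) 2 μ :=
  (memLp_two_iff_integrable_sq (measurable_sqrtRnDeriv P μ).aestronglyMeasurable).2 <| by
    simpa only [sq_sqrtRnDeriv] using Measure.integrable_toReal_rnDeriv

lemma integral_sq_sqrtRnDeriv {P μ : Measure Y} [IsProbabilityMeasure P] [SigmaFinite μ]
    (h : P ≪ μ) : ∫ x, sqrtRnDeriv P μ x ^ 2 ∂μ = 1 := by
  simp [sq_sqrtRnDeriv, Measure.integral_toReal_rnDeriv h]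

lemma sqrtRnDeriv_eq_mul_sqrtRnDeriv {P ν μ : Measure Y} [SigmaFinite P] [SigmaFinite ν]
    [SigmaFinite μ] (h : P ≪ ν) :
    sqrtRnDeriv P μ =ᵐ[μ] fun x => sqrtRnDeriv P ν x * sqrtRnDeriv ν μ x := by
  filter_upwards [Measure.rnDeriv_mul_rnDeriv (κ := μ) h] with x hx
  rw [sqrtRnDeriv, sqrtRnDeriv, sqrtRnDeriv, ← hx, Pi.mul_apply, ENNReal.toReal_mul,
    Real.sqrt_mul ENNReal.toReal_nonneg]

end SqrtRnDeriv

section Hellinger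

variable {Y : Type*} [MeasurableSpace Y]

lemma hellD_nonneg (P Q : Measure Y) : 0 ≤ hellD P Q := Real.sqrt_nonneg _

lemma hellD_eq_sqrt_integral {P Q μ : Measure Y} [IsFiniteMeasure P] [IsFiniteMeasure Q]
    [SigmaFinite μ] (hP : P ≪ μ) (hQ : Q ≪ μ) :
    hellD P Q = √(1 / 2 * ∫ x, (sqrtRnDeriv P μ x - sqrtRnDeriv Q μ x) ^ 2 ∂μ) := by
  have hPν : P ≪ P + Q := Measure.absolutelyContinuous_of_le (Measure.le_add_right le_rfl)
  have hQν : Q ≪ P + Q := Measure.absolutelyContinuous_of_le (Measure.le_add_left le_rfl)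
  rw [hellD, ← integral_rnDeriv_smul (hP.add_left hQ)]
  congr 2
  refine integral_congr_ae ?_
  filter_upwards [sqrtRnDeriv_eq_mul_sqrtRnDeriv (μ := μ) hPν,
    sqrtRnDeriv_eq_mul_sqrtRnDeriv (μ := μ) hQν] with x hPx hQx
  rw [smul_eq_mul, hPx, hQx, ← sub_mul, mul_pow, sq_sqrtRnDeriv]
  simp only [sqrtRnDeriv]
  ring

lemma hellD_sq_eq_integral {P Q μ : Measure Y} [IsFiniteMeasure P] [IsFiniteMeasure Q]
    [SigmaFinite μ] (hP : P ≪ μ) (hQ : Q ≪ μ) :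
    hellD P Q ^ 2 = 1 / 2 * ∫ x, (sqrtRnDeriv P μ x - sqrtRnDeriv Q μ x) ^ 2 ∂μ := by
  rw [hellD_eq_sqrt_integral hP hQ, Real.sq_sqrt (by positivity)]

lemma norm_toLp_sub_toLp {μ : Measure Y} {u v : Y → ℝ} (hu : MemLp u 2 μ) (hv : MemLp v 2 μ) :
    ‖hu.toLp u - hv.toLp v‖ = √(∫ x, (u x - v x) ^ 2 ∂μ) := by
  rw [← MemLp.toLp_sub, Lp.norm_toLp, (hu.sub hv).eLpNorm_eq_integral_rpow_norm two_ne_zero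
    ENNReal.ofNat_ne_top, ENNReal.toReal_ofReal (by positivity), Real.sqrt_eq_rpow]
  simp [Real.norm_eq_abs, sq_abs]

lemma hellD_triangle (P Q R : Measure Y) [IsFiniteMeasure P] [IsFiniteMeasure Q]
    [IsFiniteMeasure R] : hellD P R ≤ hellD P Q + hellD Q R := by
  set μ := P + Q + R
  have hP : P ≪ μ :=
    Measure.absolutelyContinuous_of_le (Measure.le_add_right (Measure.le_add_right le_rfl))
  have hQ : Q ≪ μ :=
    Measure.absolutelyContinuous_of_le (Measure.le_add_right (Measure.le_add_left le_rfl))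
  have hR : R ≪ μ := Measure.absolutelyContinuous_of_le (Measure.le_add_left le_rfl)
  have hu := memLp_sqrtRnDeriv P μ
  have hv := memLp_sqrtRnDeriv Q μ
  have hw := memLp_sqrtRnDeriv R μ
  have half_nonneg : (0 : ℝ) ≤ 1 / 2 := by norm_num
  rw [hellD_eq_sqrt_integral hP hQ, hellD_eq_sqrt_integral hQ hR, hellD_eq_sqrt_integral hP hR,
    Real.sqrt_mul half_nonneg, Real.sqrt_mul half_nonneg, Real.sqrt_mul half_nonneg, ← mul_add,
    ← norm_toLp_sub_toLp hu hv, ← norm_toLp_sub_toLp hv hw, ← norm_toLp_sub_toLp hu hw]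
  gcongr
  exact norm_sub_le_norm_sub_add_norm_sub _ _ _

lemma hellD_sq_eq_one_sub_integral {P Q μ : Measure Y} [IsProbabilityMeasure P]
    [IsProbabilityMeasure Q] [SigmaFinite μ] (hP : P ≪ μ) (hQ : Q ≪ μ) :
    hellD P Q ^ 2 = 1 - ∫ x, sqrtRnDeriv P μ x * sqrtRnDeriv Q μ x ∂μ := by
  have hu := memLp_sqrtRnDeriv P μ
  have hv := memLp_sqrtRnDeriv Q μ
  have hsq : Integrable (fun x => sqrtRnDeriv P μ x ^ 2 + sqrtRnDeriv Q μ x ^ 2) μ :=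
    hu.integrable_sq.add hv.integrable_sq
  have hmul : Integrable (fun x => 2 * (sqrtRnDeriv P μ x * sqrtRnDeriv Q μ x)) μ :=
    (hu.integrable_mul hv).const_mul 2
  have hexpand : ∀ x, (sqrtRnDeriv P μ x - sqrtRnDeriv Q μ x) ^ 2
      = sqrtRnDeriv P μ x ^ 2 + sqrtRnDeriv Q μ x ^ 2
        - 2 * (sqrtRnDeriv P μ x * sqrtRnDeriv Q μ x) := fun x => by ring
  rw [hellD_sq_eq_integral hP hQ, integral_congr_ae (.of_forall hexpand), integral_sub hsq hmul,
    integral_add hu.integrable_sq hv.integrable_sq, integral_const_mul,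
    integral_sq_sqrtRnDeriv hP, integral_sq_sqrtRnDeriv hQ]
  ring

lemma hellD_sq_le_one (P Q : Measure Y) [IsProbabilityMeasure P] [IsProbabilityMeasure Q] :
    hellD P Q ^ 2 ≤ 1 := by
  rw [hellD_sq_eq_one_sub_integral
    (Measure.absolutelyContinuous_of_le (Measure.le_add_right le_rfl))
    (Measure.absolutelyContinuous_of_le (Measure.le_add_left le_rfl))]
  have : 0 ≤ ∫ x, sqrtRnDeriv P (P + Q) x * sqrtRnDeriv Q (P + Q) x ∂(P + Q) :=
    integral_nonneg fun x => mul_nonneg (sqrtRnDeriv_nonneg _ _ x) (sqrtRnDeriv_nonneg _ _ x)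
  linarith

end Hellinger

section Tensorization

variable {X : Type*} [MeasurableSpace X]

lemma sqrtRnDeriv_pi {n : ℕ} {ν μ : Fin n → Measure X} [∀ i, SigmaFinite (ν i)]
    [∀ i, SigmaFinite (μ i)] (h : ∀ i, ν i ≪ μ i) :
    sqrtRnDeriv (Measure.pi ν) (Measure.pi μ)
      =ᵐ[Measure.pi μ] fun x => ∏ i, sqrtRnDeriv (ν i) (μ i) (x i) := by
  have hdens := Measure.pi_eq_withDensity_rnDeriv h ▸
    Measure.rnDeriv_withDensity (Measure.pi μ) (Finset.measurable_prod _ fun i _ =>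
      (Measure.measurable_rnDeriv _ _).comp (measurable_pi_apply i))
  filter_upwards [hdens] with x hx
  rw [sqrtRnDeriv, hx, ENNReal.toReal_prod, Real.sqrt_prod _ fun i _ => ENNReal.toReal_nonneg]
  rfl

lemma one_sub_hellD_sq_pi {n : ℕ} (P Q : Fin n → Measure X) [∀ i, IsProbabilityMeasure (P i)]
    [∀ i, IsProbabilityMeasure (Q i)] :
    1 - hellD (Measure.pi P) (Measure.pi Q) ^ 2 = ∏ i, (1 - hellD (P i) (Q i) ^ 2) := by
  set μ := fun i => P i + Q i
  have hP : ∀ i, P i ≪ μ i := fun i =>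
    Measure.absolutelyContinuous_of_le (Measure.le_add_right le_rfl)
  have hQ : ∀ i, Q i ≪ μ i := fun i =>
    Measure.absolutelyContinuous_of_le (Measure.le_add_left le_rfl)
  have hPN : Measure.pi P ≪ Measure.pi μ :=
    Measure.pi_eq_withDensity_rnDeriv hP ▸ withDensity_absolutelyContinuous _ _
  have hQN : Measure.pi Q ≪ Measure.pi μ :=
    Measure.pi_eq_withDensity_rnDeriv hQ ▸ withDensity_absolutelyContinuous _ _
  rw [hellD_sq_eq_one_sub_integral hPN hQN, sub_sub_cancel]
  calc ∫ x, sqrtRnDeriv (Measure.pi P) (Measure.pi μ) x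
          * sqrtRnDeriv (Measure.pi Q) (Measure.pi μ) x ∂Measure.pi μ
      = ∫ x, ∏ i, sqrtRnDeriv (P i) (μ i) (x i) * sqrtRnDeriv (Q i) (μ i) (x i)
          ∂Measure.pi μ := by
        refine integral_congr_ae ?_
        filter_upwards [sqrtRnDeriv_pi hP, sqrtRnDeriv_pi hQ] with x hPx hQx
        rw [hPx, hQx, Finset.prod_mul_distrib]
    _ = ∏ i, ∫ y, sqrtRnDeriv (P i) (μ i) y * sqrtRnDeriv (Q i) (μ i) y ∂μ i :=
        integral_fintype_prod_eq_prod
          (fun i y => sqrtRnDeriv (P i) (μ i) y * sqrtRnDeriv (Q i) (μ i) y)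
    _ = ∏ i, (1 - hellD (P i) (Q i) ^ 2) := by
        simp only [hellD_sq_eq_one_sub_integral (hP _) (hQ _), sub_sub_cancel]

lemma hellD_pi_le (N : ℕ) (P Q : Measure X) [IsProbabilityMeasure P] [IsProbabilityMeasure Q] :
    hellD (Measure.pi fun _ : Fin N => P) (Measure.pi fun _ : Fin N => Q)
      ≤ √N * hellD P Q := by
  have hpi := one_sub_hellD_sq_pi (fun _ : Fin N => P) (fun _ => Q)
  rw [Finset.prod_const, Finset.card_univ, Fintype.card_fin] at hpi
  have hbernoulli := one_add_mul_le_pow (a := -hellD P Q ^ 2)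
    (by linarith [hellD_sq_le_one P Q]) N
  rw [← sub_eq_add_neg] at hbernoulli
  rw [← Real.sqrt_sq (hellD_nonneg _ _), ← Real.sqrt_sq (hellD_nonneg P Q),
    ← Real.sqrt_mul N.cast_nonneg]
  exact Real.sqrt_le_sqrt (by linarith)

end Tensorization

section Mixture

variable {Y ι : Type*} [MeasurableSpace Y] [Fintype ι]

lemma mixture_absolutelyContinuous (c : ι → ℝ) {ν : ι → Measure Y} {μ : Measure Y}
    (h : ∀ i, ν i ≪ μ) : ∑ i, ENNReal.ofReal (c i) • ν i ≪ μ := by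
  rw [← Measure.sum_fintype]
  exact Measure.absolutelyContinuous_sum_left fun i => (h i).smul_left _

lemma sqrtRnDeriv_mixture {c : ι → ℝ} (hc : ∀ i, 0 ≤ c i) (ν : ι → Measure Y)
    [∀ i, IsFiniteMeasure (ν i)] (μ : Measure Y) [SigmaFinite μ] :
    sqrtRnDeriv (∑ i, ENNReal.ofReal (c i) • ν i) μ
      =ᵐ[μ] fun x => √(∑ i, c i * ((ν i).rnDeriv μ x).toReal) := by
  have hsmul : ∀ᵐ x ∂μ, ∀ i, (ENNReal.ofReal (c i) • ν i).rnDeriv μ x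
      = ENNReal.ofReal (c i) * (ν i).rnDeriv μ x :=
    ae_all_iff.2 fun i => Measure.rnDeriv_smul_left_of_ne_top' (ν i) μ ENNReal.ofReal_ne_top
  have hfin : ∀ᵐ x ∂μ, ∀ i, (ν i).rnDeriv μ x ≠ ∞ :=
    ae_all_iff.2 fun i => (Measure.rnDeriv_lt_top (ν i) μ).mono fun _ hx => hx.ne
  filter_upwards [Measure.rnDeriv_finset_sum Finset.univ (fun i => ENNReal.ofReal (c i) • ν i) μ,
    hsmul, hfin] with x hsum hx hxfin
  rw [sqrtRnDeriv, hsum, Finset.sum_apply, ENNReal.toReal_sum fun i _ =>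
    (hx i).symm ▸ ENNReal.mul_ne_top ENNReal.ofReal_ne_top (hxfin i)]
  congr 1
  refine Finset.sum_congr rfl fun i _ => ?_
  rw [hx i, ENNReal.toReal_mul, ENNReal.toReal_ofReal (hc i)]

lemma hellD_sq_mixture_le {p : ι → ℝ} (hp : ∀ i, 0 ≤ p i) (Q Q' : ι → Measure Y)
    [∀ i, IsFiniteMeasure (Q i)] [∀ i, IsFiniteMeasure (Q' i)] :
    hellD (∑ i, ENNReal.ofReal (p i) • Q i) (∑ i, ENNReal.ofReal (p i) • Q' i) ^ 2
      ≤ ∑ i, p i * hellD (Q i) (Q' i) ^ 2 := by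
  set μ := ∑ i, (Q i + Q' i)
  have hQ : ∀ i, Q i ≪ μ := fun i =>
    (Measure.absolutelyContinuous_of_le (Measure.le_add_right le_rfl)).trans
      (Measure.absolutelyContinuous_finset_sum_right _ i)
  have hQ' : ∀ i, Q' i ≪ μ := fun i =>
    (Measure.absolutelyContinuous_of_le (Measure.le_add_left le_rfl)).trans
      (Measure.absolutelyContinuous_finset_sum_right _ i)
  have hint : ∀ i, Integrable
      (fun x => p i * (sqrtRnDeriv (Q i) μ x - sqrtRnDeriv (Q' i) μ x) ^ 2) μ := fun i =>
    ((memLp_sqrtRnDeriv _ μ).sub (memLp_sqrtRnDeriv _ μ)).integrable_sq.const_mul (p i)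
  set A := ∑ i, ENNReal.ofReal (p i) • Q i
  set B := ∑ i, ENNReal.ofReal (p i) • Q' i
  rw [hellD_sq_eq_integral (mixture_absolutelyContinuous p hQ) (mixture_absolutelyContinuous p hQ')]
  calc 1 / 2 * ∫ x, (sqrtRnDeriv A μ x - sqrtRnDeriv B μ x) ^ 2 ∂μ
      ≤ 1 / 2 * ∫ x, ∑ i, p i * (sqrtRnDeriv (Q i) μ x - sqrtRnDeriv (Q' i) μ x) ^ 2 ∂μ := by
        refine mul_le_mul_of_nonneg_left ?_ (by norm_num)
        refine integral_mono_ae ((memLp_sqrtRnDeriv A μ).sub (memLp_sqrtRnDeriv B μ)).integrable_sq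
          (integrable_finsetSum _ fun i _ => hint i) ?_
        filter_upwards [sqrtRnDeriv_mixture hp Q μ, sqrtRnDeriv_mixture hp Q' μ] with x hx hx'
        rw [hx, hx']
        exact sq_sqrt_sum_mul_sub_sqrt_sum_mul_le _ hp (fun _ => ENNReal.toReal_nonneg)
          (fun _ => ENNReal.toReal_nonneg)
    _ = ∑ i, p i * hellD (Q i) (Q' i) ^ 2 := by
        rw [integral_finsetSum _ fun i _ => hint i, Finset.mul_sum]
        refine Finset.sum_congr rfl fun i _ => ?_
        rw [integral_const_mul, hellD_sq_eq_integral (hQ i) (hQ' i)]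
        ring

lemma hellD_sq_mixture_le_sum_abs {p p' : ι → ℝ} (hp : ∀ i, 0 ≤ p i) (hp' : ∀ i, 0 ≤ p' i)
    (Q : ι → Measure Y) [∀ i, IsProbabilityMeasure (Q i)] :
    hellD (∑ i, ENNReal.ofReal (p i) • Q i) (∑ i, ENNReal.ofReal (p' i) • Q i) ^ 2
      ≤ 1 / 2 * ∑ i, |p i - p' i| := by
  set μ := ∑ i, Q i
  have hQ : ∀ i, Q i ≪ μ := Measure.absolutelyContinuous_finset_sum_right Q
  have hint : ∀ i, Integrable (fun x => |p i - p' i| * ((Q i).rnDeriv μ x).toReal) μ :=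
    fun i => Measure.integrable_toReal_rnDeriv.const_mul _
  set A := ∑ i, ENNReal.ofReal (p i) • Q i
  set B := ∑ i, ENNReal.ofReal (p' i) • Q i
  rw [hellD_sq_eq_integral (mixture_absolutelyContinuous p hQ) (mixture_absolutelyContinuous p' hQ)]
  gcongr
  calc ∫ x, (sqrtRnDeriv A μ x - sqrtRnDeriv B μ x) ^ 2 ∂μ
      ≤ ∫ x, ∑ i, |p i - p' i| * ((Q i).rnDeriv μ x).toReal ∂μ := by
        refine integral_mono_ae ((memLp_sqrtRnDeriv A μ).sub (memLp_sqrtRnDeriv B μ)).integrable_sq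
          (integrable_finsetSum _ fun i _ => hint i) ?_
        filter_upwards [sqrtRnDeriv_mixture hp Q μ, sqrtRnDeriv_mixture hp' Q μ] with x hx hx'
        rw [hx, hx']
        refine (sq_sqrt_sub_sqrt_le_abs
          (Finset.sum_nonneg fun i _ => mul_nonneg (hp i) ENNReal.toReal_nonneg)
          (Finset.sum_nonneg fun i _ => mul_nonneg (hp' i) ENNReal.toReal_nonneg)).trans ?_
        rw [← Finset.sum_sub_distrib]
        refine (Finset.abs_sum_le_sum_abs _ _).trans_eq (Finset.sum_congr rfl fun i _ => ?_)
        rw [← sub_mul, abs_mul, abs_of_nonneg ENNReal.toReal_nonneg]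
    _ = ∑ i, |p i - p' i| := by
        rw [integral_finsetSum _ fun i _ => hint i]
        simp [integral_const_mul, Measure.integral_toReal_rnDeriv (hQ _)]

lemma hellD_mixture_le_of_forall_le {p : ι → ℝ} (hp : ∀ i, 0 ≤ p i) (hp1 : ∑ i, p i = 1)
    (Q Q' : ι → Measure Y) [∀ i, IsFiniteMeasure (Q i)] [∀ i, IsFiniteMeasure (Q' i)]
    {r : ℝ} (hr : 0 ≤ r) (h : ∀ i, hellD (Q i) (Q' i) ≤ r) :
    hellD (∑ i, ENNReal.ofReal (p i) • Q i) (∑ i, ENNReal.ofReal (p i) • Q' i) ≤ r := by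
  refine (pow_le_pow_iff_left₀ (hellD_nonneg _ _) hr two_ne_zero).1 ?_
  calc _ ≤ ∑ i, p i * hellD (Q i) (Q' i) ^ 2 := hellD_sq_mixture_le hp Q Q'
    _ ≤ ∑ i, p i * r ^ 2 := by gcongr with i; exacts [hp i, hellD_nonneg _ _, h i]
    _ = r ^ 2 := by rw [← Finset.sum_mul, hp1, one_mul]

end Mixture

theorem stmt_4_general {X : Type*} [MeasurableSpace X] (q k0 N : ℕ)
    (P : EuclideanSpace ℝ (Fin q) → Measure X) [∀ ϑ, IsProbabilityMeasure (P ϑ)]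
    (θ θ' : Fin k0 → EuclideanSpace ℝ (Fin q))
    (p p' : Fin k0 → ℝ) (hp : ∀ i, 0 < p i) (hp' : ∀ i, 0 < p' i)
    (hps : ∑ i, p i = 1) :
    hellD (∑ i, ENNReal.ofReal (p i) • (Measure.pi fun _ : Fin N => P (θ i)))
        (∑ i, ENNReal.ofReal (p' i) • (Measure.pi fun _ : Fin N => P (θ' i))) ≤
      ⨅ τ : Equiv.Perm (Fin k0),
        (Real.sqrt (N : ℝ) * (⨆ i, hellD (P (θ i)) (P (θ' (τ i)))) +
          Real.sqrt ((1 / 2) * ∑ i, |p i - p' (τ i)|)) := by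
  refine le_ciInf fun τ => ?_
  set PN := fun ϑ => Measure.pi fun _ : Fin N => P ϑ
  set M := ⨆ i, hellD (P (θ i)) (P (θ' (τ i)))
  rw [← Equiv.sum_comp τ (fun j => ENNReal.ofReal (p' j) • PN (θ' j))]
  have hM : ∀ i, hellD (P (θ i)) (P (θ' (τ i))) ≤ M := fun i =>
    le_ciSup (f := fun i => hellD (P (θ i)) (P (θ' (τ i)))) (Set.finite_range _).bddAbove i
  calc _ ≤ hellD (∑ i, ENNReal.ofReal (p i) • PN (θ i))
          (∑ i, ENNReal.ofReal (p i) • PN (θ' (τ i)))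
        + hellD (∑ i, ENNReal.ofReal (p i) • PN (θ' (τ i)))
          (∑ i, ENNReal.ofReal (p' (τ i)) • PN (θ' (τ i))) := hellD_triangle _ _ _
    _ ≤ √N * M + √(1 / 2 * ∑ i, |p i - p' (τ i)|) := by
        gcongr
        · exact hellD_mixture_le_of_forall_le (fun i => (hp i).le) hps _ _
            (mul_nonneg (Real.sqrt_nonneg _) (Real.iSup_nonneg fun i => hellD_nonneg _ _))
            fun i => (hellD_pi_le N _ _).trans (by gcongr; exact hM i)
        · exact Real.le_sqrt_of_sq_le (hellD_sq_mixture_le_sum_abs (fun i => (hp i).le)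
            (fun i => (hp' (τ i)).le) _)

/-- Upper bound on the Hellinger distance between mixtures of `N`-fold product measures:
`h(P_{G,N}, P_{G',N}) ≤ min_τ (√N maxᵢ h(P_{θᵢ}, P_{θ'_{τ(i)}}) + √(½ ∑ᵢ |pᵢ - p'_{τ(i)}|))`. -/
theorem stmt_4 {X : Type*} [MeasurableSpace X] (q k0 N : ℕ) (hk0 : 1 ≤ k0) (hN : 1 ≤ N)
    (Θ : Set (EuclideanSpace ℝ (Fin q)))
    (P : EuclideanSpace ℝ (Fin q) → Measure X) [∀ ϑ, IsProbabilityMeasure (P ϑ)]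
    (θ θ' : Fin k0 → EuclideanSpace ℝ (Fin q))
    (hθ : ∀ i, θ i ∈ Θ) (hθ' : ∀ i, θ' i ∈ Θ)
    (hθinj : Function.Injective θ) (hθ'inj : Function.Injective θ')
    (p p' : Fin k0 → ℝ) (hp : ∀ i, 0 < p i) (hp' : ∀ i, 0 < p' i)
    (hps : ∑ i, p i = 1) (hp's : ∑ i, p' i = 1) :
    hellD (∑ i, ENNReal.ofReal (p i) • (Measure.pi fun _ : Fin N => P (θ i)))
        (∑ i, ENNReal.ofReal (p' i) • (Measure.pi fun _ : Fin N => P (θ' i))) ≤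
      ⨅ τ : Equiv.Perm (Fin k0),
        (Real.sqrt (N : ℝ) * (⨆ i, hellD (P (θ i)) (P (θ' (τ i)))) +
          Real.sqrt ((1 / 2) * ∑ i, |p i - p' (τ i)|)) :=
  stmt_4_general q k0 N P θ θ' p p' hp hp' hps
end

section
/- Let $k \geq 1$, let $n = 2k-1$, and for $j \in [2k]$ define $f_j(x) = x^{j-1}(1-x)^{n-(j-1)}$. For distinct reals $x_1,\ldots,x_k$, let $A^{(k)} \in \mathbb{R}^{2k\times 2k}$ have entries $A_{ij} = f_j(x_m)$ for $i = 2m-1$ and $A_{ij} = f'_j(x_m)$ for $i = 2m$. Then $\det(A^{(k)}) = \prod_{1 \leq \alpha < \beta \leq k}(x_\alpha - x_\beta)^4$ (with empty product $1$ when $k = 1$). -/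
open scoped BigOperators

open Finset

lemma prod_range_two_mul (k : ℕ) (g : ℕ → ℝ) :
    ∏ i ∈ range (2 * k), g i = ∏ α ∈ range k, (g (2 * α) * g (2 * α + 1)) := by
  induction k with
  | zero => simp
  | succ k ih =>
    have h : 2 * (k + 1) = (2 * k + 1) + 1 := by ring
    rw [h, Finset.prod_range_succ, Finset.prod_range_succ, ih, Finset.prod_range_succ]
    ring

lemma fin_pair_prod_eq_range (N : ℕ) (f : ℕ → ℕ → ℝ) :
    ∏ i : Fin N, ∏ j ∈ Ioi i, f i.val j.val
      = ∏ j ∈ range N, ∏ i ∈ range j, f i j := by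
  rw [Finset.prod_comm' (t' := Finset.univ) (s' := fun j => Finset.Iio j)
    (by intro i j; simp [Finset.mem_Ioi, Finset.mem_Iio])]
  rw [← Fin.prod_univ_eq_prod_range (fun j => ∏ i ∈ range j, f i j) N]
  refine Finset.prod_congr rfl fun j _ => ?_
  have h : (range j.val) = map Fin.valEmbedding (Iio j) := by
    rw [Fin.map_valEmbedding_Iio, Nat.Iio_eq_range]
  rw [h, Finset.prod_map]
  rfl

-- Helper 3: interleaved pair product
lemma interleaved_pair_prod (u v : ℕ → ℝ) (k : ℕ) :
    ∏ j ∈ range (2 * k), ∏ i ∈ range j,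
        ((if j % 2 = 0 then u (j / 2) else v (j / 2))
          - (if i % 2 = 0 then u (i / 2) else v (i / 2)))
      = (∏ α ∈ range k, (v α - u α)) *
          ∏ β ∈ range k, ∏ α ∈ range β,
            ((u β - u α) * (v β - u α) * (u β - v α) * (v β - v α)) := by
  set y : ℕ → ℝ := fun i => if i % 2 = 0 then u (i / 2) else v (i / 2) with hy
  have hu : ∀ α, y (2 * α) = u α := by
    intro α; simp only [hy]
    rw [if_pos (by omega), Nat.mul_div_cancel_left _ (by norm_num)]
  have hv : ∀ α, y (2 * α + 1) = v α := by
    intro α; simp only [hy]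
    rw [if_neg (by omega)]
    congr 1; omega
  induction k with
  | zero => simp
  | succ k ih =>
    have h : 2 * (k + 1) = (2 * k + 1) + 1 := by ring
    rw [h, Finset.prod_range_succ, Finset.prod_range_succ, ih]
    have e1 : ∏ i ∈ range (2 * k + 1), (y (2 * k + 1) - y i)
        = (v k - u k) * ∏ α ∈ range k, ((v k - u α) * (v k - v α)) := by
      rw [Finset.prod_range_succ, prod_range_two_mul k (fun i => y (2*k+1) - y i)]
      have : (2:ℕ) * k + 1 = 2 * k + 1 := rfl
      rw [hu k, hv k]
      rw [Finset.prod_congr rfl (fun α _ => by rw [hu α, hv α])]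
      ring
    have e2 : ∏ i ∈ range (2 * k), (y (2 * k) - y i)
        = ∏ α ∈ range k, ((u k - u α) * (u k - v α)) := by
      rw [prod_range_two_mul k (fun i => y (2*k) - y i), hu k]
      exact Finset.prod_congr rfl (fun α _ => by rw [hu α, hv α])
    rw [e1, e2, Finset.prod_range_succ, Finset.prod_range_succ]
    have e3 : ∏ α ∈ range k, ((u k - u α) * (v k - u α) * (u k - v α) * (v k - v α))
        = (∏ α ∈ range k, ((u k - u α) * (u k - v α))) *
            ∏ α ∈ range k, ((v k - u α) * (v k - v α)) := by
      rw [← Finset.prod_mul_distrib]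
      exact Finset.prod_congr rfl (fun α _ => by ring)
    rw [e3]
    ring

lemma bernstein_det {N : ℕ} (w : Fin N → ℝ) :
    (Matrix.of fun i j : Fin N => w i ^ j.val * (1 - w i) ^ (N - 1 - j.val)).det
      = ∏ i : Fin N, ∏ j ∈ Ioi i, (w j - w i) := by
  classical
  set C : Matrix (Fin N) (Fin N) ℝ := Matrix.of fun m j =>
    if j.val ≤ m.val then (-1 : ℝ) ^ (m.val - j.val) * ((N - 1 - j.val).choose (m.val - j.val))
    else 0 with hC
  have hfact : (Matrix.of fun i j : Fin N => w i ^ j.val * (1 - w i) ^ (N - 1 - j.val))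
      = Matrix.vandermonde w * C := by
    ext i j
    rw [Matrix.mul_apply]
    simp only [Matrix.vandermonde_apply, hC, Matrix.of_apply]
    have hsum : ∑ m : Fin N, w i ^ m.val *
        (if j.val ≤ m.val then (-1 : ℝ) ^ (m.val - j.val) * ((N - 1 - j.val).choose (m.val - j.val)) else 0)
        = ∑ m ∈ range N, w i ^ m *
        (if j.val ≤ m then (-1 : ℝ) ^ (m - j.val) * ((N - 1 - j.val).choose (m - j.val)) else 0) :=
      Fin.sum_univ_eq_sum_range (fun m => w i ^ m *
        (if j.val ≤ m then (-1 : ℝ) ^ (m - j.val) * ((N - 1 - j.val).choose (m - j.val)) else 0)) N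
    rw [hsum]
    have hsub : ∑ m ∈ range N, w i ^ m *
        (if j.val ≤ m then (-1 : ℝ) ^ (m - j.val) * ((N - 1 - j.val).choose (m - j.val)) else 0)
        = ∑ m ∈ Ico j.val N, w i ^ m *
        (if j.val ≤ m then (-1 : ℝ) ^ (m - j.val) * ((N - 1 - j.val).choose (m - j.val)) else 0) := by
      refine (Finset.sum_subset (fun m hm => by simp at hm ⊢; omega) (fun m hm hnot => ?_)).symm
      rw [if_neg (by simp at hm hnot ⊢; omega), mul_zero]
    rw [hsub, Finset.sum_Ico_eq_sum_range]
    have hKN : N - j.val = (N - 1 - j.val) + 1 := by have := j.isLt; omega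
    rw [hKN]
    have hbin : (1 - w i) ^ (N - 1 - j.val)
        = ∑ m ∈ range ((N - 1 - j.val) + 1), (-(w i)) ^ m * ((N - 1 - j.val).choose m) := by
      have : (1 : ℝ) - w i = -(w i) + 1 := by ring
      rw [this, add_pow]
      exact Finset.sum_congr rfl (fun m _ => by rw [one_pow, mul_one])
    rw [hbin, Finset.mul_sum]
    refine Finset.sum_congr rfl (fun m hm => ?_)
    rw [if_pos (by omega)]
    have h1 : j.val + m - j.val = m := by omega
    rw [h1, pow_add, neg_pow]
    ring
  rw [hfact, Matrix.det_mul]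
  have hCdet : C.det = 1 := by
    rw [Matrix.det_of_lowerTriangular C (by
      intro a b hab
      have : a.val < b.val := hab
      simp only [hC, Matrix.of_apply]
      rw [if_neg (by omega)])]
    refine Finset.prod_eq_one (fun a _ => ?_)
    simp [hC]
  rw [hCdet, mul_one, Matrix.det_vandermonde]

def cvIdx {k : ℕ} (i : Fin (2 * k)) : Fin k := ⟨i.val / 2, Nat.div_lt_of_lt_mul i.isLt⟩

/-- the ε-perturbed confluent matrix: odd rows are difference quotients written
polynomially in ε. -/
def cvM (k : ℕ) (x : Fin k → ℝ) (ε : ℝ) : Matrix (Fin (2 * k)) (Fin (2 * k)) ℝ :=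
  Matrix.of fun i j =>
    if i.val % 2 = 0 then
      x (cvIdx i) ^ j.val * (1 - x (cvIdx i)) ^ (2 * k - 1 - j.val)
    else
      (∑ m ∈ range j.val, (x (cvIdx i) + ε) ^ m * x (cvIdx i) ^ (j.val - 1 - m)) *
          (1 - x (cvIdx i) - ε) ^ (2 * k - 1 - j.val)
        - x (cvIdx i) ^ j.val *
          ∑ m ∈ range (2 * k - 1 - j.val),
            (1 - x (cvIdx i) - ε) ^ m * (1 - x (cvIdx i)) ^ (2 * k - 1 - j.val - 1 - m)

def cvG (k : ℕ) (x : Fin k → ℝ) (ε : ℝ) : ℝ :=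
  ∏ α : Fin k, ∏ β ∈ Ioi α, ((x β - x α) ^ 2 * ((x β - x α) ^ 2 - ε ^ 2))

lemma cv_key (k : ℕ) (x : Fin k → ℝ) (ε : ℝ) :
    ε ^ k * (cvM k x ε).det = ε ^ k * cvG k x ε := by
  classical
  set y : Fin (2 * k) → ℝ := fun i => if i.val % 2 = 0 then x (cvIdx i) else x (cvIdx i) + ε
    with hy
  -- the Bernstein matrix at the 2k perturbed points
  set Bm : Matrix (Fin (2 * k)) (Fin (2 * k)) ℝ :=
    Matrix.of fun i j => y i ^ j.val * (1 - y i) ^ (2 * k - 1 - j.val) with hBm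
  -- row-operation matrix
  set Q : Matrix (Fin (2 * k)) (Fin (2 * k)) ℝ :=
    Matrix.of fun i l =>
      (if l = i then (if i.val % 2 = 0 then (1 : ℝ) else ε) else 0) +
        (if i.val % 2 = 1 ∧ l.val + 1 = i.val then 1 else 0) with hQ
  have hfact : Bm = Q * cvM k x ε := by
    ext i j
    rw [Matrix.mul_apply]
    simp only [hQ, Matrix.of_apply, add_mul, Finset.sum_add_distrib, ite_mul, zero_mul, one_mul,
      Finset.sum_ite_eq' Finset.univ i, Finset.mem_univ, if_true]
    rcases Nat.even_or_odd i.val with he | ho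
    · have h0 : i.val % 2 = 0 := Nat.even_iff.mp he
      have h1 : ¬ i.val % 2 = 1 := by omega
      rw [if_pos h0]
      have : ∀ l : Fin (2 * k), (if i.val % 2 = 1 ∧ l.val + 1 = i.val then cvM k x ε l j else 0) = 0 :=
        fun l => if_neg (by tauto)
      rw [Finset.sum_congr rfl (fun l _ => this l), Finset.sum_const_zero, add_zero]
      try rw [one_mul]
      simp only [hBm, Matrix.of_apply, cvM, hy, if_pos h0]
    · have h1 : i.val % 2 = 1 := Nat.odd_iff.mp ho
      have h0 : ¬ i.val % 2 = 0 := by omega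
      have hk1 : i.val - 1 < 2 * k := by have := i.isLt; omega
      set i' : Fin (2 * k) := ⟨i.val - 1, hk1⟩ with hi'
      have hcond : ∀ l : Fin (2 * k),
          (if i.val % 2 = 1 ∧ l.val + 1 = i.val then cvM k x ε l j else 0)
            = (if l = i' then cvM k x ε l j else 0) := by
        intro l
        congr 1
        simp only [eq_iff_iff, Fin.ext_iff, hi']
        constructor
        · rintro ⟨-, h⟩; omega
        · intro h; exact ⟨h1, by omega⟩
      rw [Finset.sum_congr rfl (fun l _ => hcond l), Finset.sum_ite_eq' Finset.univ i',
        if_pos (Finset.mem_univ _)]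
      rw [if_neg h0]
      have hidx : cvIdx i' = cvIdx i := by
        simp only [cvIdx, Fin.mk.injEq, hi']
        omega
      have hi'even : i'.val % 2 = 0 := by simp only [hi']; omega
      set t := x (cvIdx i) with ht
      have hMi' : cvM k x ε i' j = t ^ j.val * (1 - t) ^ (2 * k - 1 - j.val) := by
        simp only [cvM, Matrix.of_apply, if_pos hi'even, hidx, ht]
      have hMi : cvM k x ε i j =
          (∑ m ∈ range j.val, (t + ε) ^ m * t ^ (j.val - 1 - m)) *
            (1 - t - ε) ^ (2 * k - 1 - j.val)
          - t ^ j.val *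
            ∑ m ∈ range (2 * k - 1 - j.val),
              (1 - t - ε) ^ m * (1 - t) ^ (2 * k - 1 - j.val - 1 - m) := by
        simp only [cvM, Matrix.of_apply, if_neg h0, ht]
      have hBij : Bm i j = (t + ε) ^ j.val * (1 - (t + ε)) ^ (2 * k - 1 - j.val) := by
        simp only [hBm, Matrix.of_apply, hy, if_neg h0, ht]
      rw [hBij, hMi, hMi']
      have hg1 := geom_sum₂_mul (t + ε) t j.val
      have hg2 := geom_sum₂_mul (1 - t - ε) (1 - t) (2 * k - 1 - j.val)
      linear_combination (-(1 - t - ε) ^ (2 * k - 1 - j.val)) * hg1 - t ^ j.val * hg2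
  have hQdet : Q.det = ε ^ k := by
    have hQ0 : Q.BlockTriangular OrderDual.toDual := by
      intro a b hab
      have hab' : a.val < b.val := hab
      simp only [hQ, Matrix.of_apply]
      rw [if_neg (fun h => by rw [Fin.ext_iff] at h; omega),
        if_neg (fun h => by omega), add_zero]
    rw [Matrix.det_of_lowerTriangular Q hQ0]
    have hdiag : ∀ i : Fin (2 * k), Q i i = (if i.val % 2 = 0 then (1 : ℝ) else ε) := by
      intro i
      simp only [hQ, Matrix.of_apply, if_true]
      rw [if_neg (show ¬(i.val % 2 = 1 ∧ i.val + 1 = i.val) from fun h => by omega), add_zero]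
    rw [Finset.prod_congr rfl (fun i _ => hdiag i),
      Fin.prod_univ_eq_prod_range (fun m => if m % 2 = 0 then (1 : ℝ) else ε) (2 * k),
      prod_range_two_mul]
    have hsimp : ∀ α ∈ range k,
        ((if (2 * α) % 2 = 0 then (1:ℝ) else ε) *
          (if (2 * α + 1) % 2 = 0 then (1:ℝ) else ε)) = ε := by
      intro α _
      rw [if_pos (by omega), if_neg (by omega), one_mul]
    rw [Finset.prod_congr rfl hsimp, Finset.prod_const, card_range]
  have hBdet : Bm.det = ∏ i : Fin (2 * k), ∏ j ∈ Ioi i, (y j - y i) := by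
    rw [hBm]
    exact bernstein_det y
  have hdetprod : ε ^ k * (cvM k x ε).det = ∏ i : Fin (2 * k), ∏ j ∈ Ioi i, (y j - y i) := by
    rw [← hBdet, hfact, Matrix.det_mul, hQdet]
  set U : ℕ → ℝ := fun m => if h : m < k then x ⟨m, h⟩ else 0 with hU
  have hUval : ∀ β : Fin k, U β.val = x β := by
    intro β
    simp only [hU]
    rw [dif_pos β.isLt]
  have hyY : ∀ i : Fin (2 * k), y i
      = (if i.val % 2 = 0 then U (i.val / 2) else U (i.val / 2) + ε) := by
    intro i
    have hlt : i.val / 2 < k := (cvIdx i).isLt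
    have hx2 : U (i.val / 2) = x (cvIdx i) := by
      simp only [hU]
      rw [dif_pos hlt]
      rfl
    simp only [hy, hx2]
  have hprod : ∏ i : Fin (2 * k), ∏ j ∈ Ioi i, (y j - y i) = ε ^ k * cvG k x ε := by
    have step1 : ∏ i : Fin (2 * k), ∏ j ∈ Ioi i, (y j - y i)
        = ∏ i : Fin (2 * k), ∏ j ∈ Ioi i,
            ((if (j : ℕ) % 2 = 0 then U ((j : ℕ) / 2) else U ((j : ℕ) / 2) + ε)
              - (if (i : ℕ) % 2 = 0 then U ((i : ℕ) / 2) else U ((i : ℕ) / 2) + ε)) :=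
      Finset.prod_congr rfl fun i _ => Finset.prod_congr rfl fun j _ => by
        rw [hyY i, hyY j]
    have step2 : ∏ i : Fin (2 * k), ∏ j ∈ Ioi i,
            ((if (j : ℕ) % 2 = 0 then U ((j : ℕ) / 2) else U ((j : ℕ) / 2) + ε)
              - (if (i : ℕ) % 2 = 0 then U ((i : ℕ) / 2) else U ((i : ℕ) / 2) + ε))
        = ∏ j ∈ range (2 * k), ∏ i ∈ range j,
            ((if j % 2 = 0 then U (j / 2) else U (j / 2) + ε)
              - (if i % 2 = 0 then U (i / 2) else U (i / 2) + ε)) :=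
      fin_pair_prod_eq_range (2 * k) (fun a b =>
        (if b % 2 = 0 then U (b / 2) else U (b / 2) + ε)
          - (if a % 2 = 0 then U (a / 2) else U (a / 2) + ε))
    have step3 : ∏ j ∈ range (2 * k), ∏ i ∈ range j,
            ((if j % 2 = 0 then U (j / 2) else U (j / 2) + ε)
              - (if i % 2 = 0 then U (i / 2) else U (i / 2) + ε))
        = (∏ α ∈ range k, (U α + ε - U α)) *
            ∏ β ∈ range k, ∏ α ∈ range β,
              ((U β - U α) * ((U β + ε) - U α) * (U β - (U α + ε)) * ((U β + ε) - (U α + ε))) :=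
      interleaved_pair_prod U (fun m => U m + ε) k
    have h1 : ∏ α ∈ range k, (U α + ε - U α) = ε ^ k := by
      have : ∀ α ∈ range k, U α + ε - U α = ε := fun α _ => by ring
      rw [Finset.prod_congr rfl this, Finset.prod_const, card_range]
    have h2 : ∏ β ∈ range k, ∏ α ∈ range β,
        ((U β - U α) * ((U β + ε) - U α) * (U β - (U α + ε)) * ((U β + ε) - (U α + ε)))
          = cvG k x ε := by
      have h4 : ∏ β ∈ range k, ∏ α ∈ range β,
          ((U β - U α) * ((U β + ε) - U α) * (U β - (U α + ε)) * ((U β + ε) - (U α + ε)))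
            = ∏ β ∈ range k, ∏ α ∈ range β,
              ((U β - U α) ^ 2 * ((U β - U α) ^ 2 - ε ^ 2)) :=
        Finset.prod_congr rfl fun β _ => Finset.prod_congr rfl fun α _ => by ring
      have h3 : ∏ α : Fin k, ∏ β ∈ Ioi α,
          ((U (β : ℕ) - U (α : ℕ)) ^ 2 * ((U (β : ℕ) - U (α : ℕ)) ^ 2 - ε ^ 2))
            = ∏ β ∈ range k, ∏ α ∈ range β,
              ((U β - U α) ^ 2 * ((U β - U α) ^ 2 - ε ^ 2)) :=
        fin_pair_prod_eq_range k (fun a b => (U b - U a) ^ 2 * ((U b - U a) ^ 2 - ε ^ 2))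
      rw [h4, ← h3, cvG]
      exact Finset.prod_congr rfl fun α _ => Finset.prod_congr rfl fun β _ => by
        rw [hUval α, hUval β]
    rw [step1, step2, step3, h1, h2]
  rw [hdetprod, hprod]

lemma cvM_det_cont (k : ℕ) (x : Fin k → ℝ) : Continuous fun ε => (cvM k x ε).det := by
  apply Continuous.matrix_det
  apply continuous_matrix
  intro i j
  simp only [cvM, Matrix.of_apply]
  split_ifs
  · exact continuous_const
  · fun_prop

lemma cvG_cont (k : ℕ) (x : Fin k → ℝ) : Continuous (cvG k x) := by
  unfold cvG
  fun_prop

lemma cv_zero (k : ℕ) (x : Fin k → ℝ) : (cvM k x 0).det = cvG k x 0 := by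
  have hne : ∀ ε : ℝ, ε ≠ 0 → (cvM k x ε).det = cvG k x ε := fun ε hε =>
    mul_left_cancel₀ (pow_ne_zero k hε) (cv_key k x ε)
  have h1 : Filter.Tendsto (fun ε => (cvM k x ε).det) (nhdsWithin 0 {(0:ℝ)}ᶜ)
      (nhds ((cvM k x 0).det)) :=
    ((cvM_det_cont k x).tendsto 0).mono_left nhdsWithin_le_nhds
  have h2 : Filter.Tendsto (fun ε => (cvM k x ε).det) (nhdsWithin 0 {(0:ℝ)}ᶜ)
      (nhds (cvG k x 0)) := by
    refine Filter.Tendsto.congr' ?_ (((cvG_cont k x).tendsto 0).mono_left nhdsWithin_le_nhds)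
    filter_upwards [self_mem_nhdsWithin] with ε hε
    exact (hne ε hε).symm
  exact tendsto_nhds_unique h1 h2

/-- The generalized (confluent) Vandermonde determinant for the Bernstein-type basis
`f_j(x) = x^(j-1) (1-x)^(n-(j-1))` with `n = 2k-1`:  rows alternate between evaluations
of `f_j` and of `f'_j` at distinct points `x_1,…,x_k`, and the determinant equals
`∏_{α<β} (x_α - x_β)^4`. -/
theorem stmt_8 (k : ℕ) (hk : 1 ≤ k) (x : Fin k → ℝ) (hx : Function.Injective x) :
    (Matrix.of fun i j : Fin (2 * k) =>
        if i.val % 2 = 0 then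
          x ⟨i.val / 2, Nat.div_lt_of_lt_mul i.isLt⟩ ^ j.val *
            (1 - x ⟨i.val / 2, Nat.div_lt_of_lt_mul i.isLt⟩) ^ (2 * k - 1 - j.val)
        else
          (j.val : ℝ) * x ⟨i.val / 2, Nat.div_lt_of_lt_mul i.isLt⟩ ^ (j.val - 1) *
              (1 - x ⟨i.val / 2, Nat.div_lt_of_lt_mul i.isLt⟩) ^ (2 * k - 1 - j.val)
            - ((2 * k - 1 - j.val : ℕ) : ℝ) *
                x ⟨i.val / 2, Nat.div_lt_of_lt_mul i.isLt⟩ ^ j.val *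
                (1 - x ⟨i.val / 2, Nat.div_lt_of_lt_mul i.isLt⟩) ^ (2 * k - 2 - j.val)).det
      = ∏ α : Fin k, ∏ β ∈ Finset.Ioi α, (x α - x β) ^ 4 := by
  have hM : (Matrix.of fun i j : Fin (2 * k) =>
        if i.val % 2 = 0 then
          x ⟨i.val / 2, Nat.div_lt_of_lt_mul i.isLt⟩ ^ j.val *
            (1 - x ⟨i.val / 2, Nat.div_lt_of_lt_mul i.isLt⟩) ^ (2 * k - 1 - j.val)
        else
          (j.val : ℝ) * x ⟨i.val / 2, Nat.div_lt_of_lt_mul i.isLt⟩ ^ (j.val - 1) *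
              (1 - x ⟨i.val / 2, Nat.div_lt_of_lt_mul i.isLt⟩) ^ (2 * k - 1 - j.val)
            - ((2 * k - 1 - j.val : ℕ) : ℝ) *
                x ⟨i.val / 2, Nat.div_lt_of_lt_mul i.isLt⟩ ^ j.val *
                (1 - x ⟨i.val / 2, Nat.div_lt_of_lt_mul i.isLt⟩) ^ (2 * k - 2 - j.val))
      = cvM k x 0 := by
    ext i j
    simp only [cvM, cvIdx, Matrix.of_apply]
    by_cases h : i.val % 2 = 0
    · rw [if_pos h, if_pos h]
    · rw [if_neg h, if_neg h]
      set t := x ⟨i.val / 2, Nat.div_lt_of_lt_mul i.isLt⟩ with ht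
      have e1 : ∀ m ∈ range j.val, (t + 0) ^ m * t ^ (j.val - 1 - m) = t ^ (j.val - 1) := by
        intro m hm
        rw [add_zero, ← pow_add]
        congr 1
        simp only [mem_range] at hm
        omega
      have e2 : ∀ m ∈ range (2 * k - 1 - j.val),
          (1 - t - 0) ^ m * (1 - t) ^ (2 * k - 1 - j.val - 1 - m) = (1 - t) ^ (2 * k - 2 - j.val) := by
        intro m hm
        rw [sub_zero, ← pow_add]
        congr 1
        simp only [mem_range] at hm
        omega
      rw [Finset.sum_congr rfl e1, Finset.sum_congr rfl e2, Finset.sum_const, Finset.sum_const,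
        card_range, card_range, nsmul_eq_mul, nsmul_eq_mul, sub_zero]
      ring
  rw [hM, cv_zero]
  unfold cvG
  exact Finset.prod_congr rfl fun α _ => Finset.prod_congr rfl fun β _ => by ring
end

section
/- Let $k$ be a positive integer, $b_1 < \cdots < b_k$ real numbers, and let each $h_i(x)$ and $g_i(x)$ be a finite linear combination of (possibly non-integer) power functions $x^\gamma$. If $\sum_{i=1}^k (h_i(x) + g_i(x)\ln x) e^{b_i x} = 0$ for Lebesgue-almost every $x$ in some nonempty interval $I \subset (0,\infty)$, then for all $x \neq 0$, $h_i(x) = 0$ and $g_i(x) = 0$ for every $i \in [k]$. -/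
/-!
For `x > 0` we have `x ^ γ = exp (γ log x)`, so the left-hand side is real analytic on `(0, ∞)`;
vanishing almost everywhere on an interval, it vanishes on all of `(0, ∞)` by the identity theorem.
Expanded, it is a linear combination of the functions `exp (β x) x ^ g (log x) ^ e`, and ordering
the triples `(β, g, e)` lexicographically, each of these is `o` of every larger one at `+∞`. So the
coefficient of the largest triple occurring must vanish, and inductively every coefficient does.
Since the `bᵢ` are distinct, the coefficients are exactly those of the `hᵢ` and `gᵢ` after
collecting equal exponents, so these vanish identically.
-/

open MeasureTheory
open Filter Real Asymptotics Topology Set Function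

theorem Real.analyticAt_rpow_const {x : ℝ} (hx : 0 < x) (p : ℝ) :
    AnalyticAt ℝ (fun y : ℝ => y ^ p) x := by
  have hexp : AnalyticAt ℝ (fun y => rexp (log y * p)) x :=
    ((analyticAt_log hx).mul analyticAt_const).rexp
  refine hexp.congr ?_
  filter_upwards [Ioi_mem_nhds hx] with y hy
  exact (rpow_def_of_pos hy p).symm

noncomputable def rpowSum {κ : Type*} [Fintype κ] (a γ : κ → ℝ) (x : ℝ) : ℝ :=
  ∑ j, a j * x ^ γ j

theorem analyticAt_rpowSum {κ : Type*} [Fintype κ] (a γ : κ → ℝ) {x : ℝ} (hx : 0 < x) :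
    AnalyticAt ℝ (rpowSum a γ) x :=
  Finset.analyticAt_fun_sum _ fun j _ => analyticAt_const.mul (analyticAt_rpow_const hx (γ j))

theorem AnalyticOnNhd.eqOn_zero_of_ae_eq_zero {𝕜 E F : Type*} [NontriviallyNormedField 𝕜]
    [NormedAddCommGroup E] [NormedSpace 𝕜 E] [NormedAddCommGroup F] [NormedSpace 𝕜 F]
    [MeasurableSpace E] {μ : Measure E} [μ.IsOpenPosMeasure] {f : E → F} {U V : Set E}
    (hf : AnalyticOnNhd 𝕜 f U) (hU : IsPreconnected U) (hV : IsOpen V) (hVne : V.Nonempty)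
    (hVU : V ⊆ U) (h : f =ᵐ[μ.restrict V] 0) : EqOn f 0 U := by
  obtain ⟨z, hz⟩ := hVne
  have hV0 : EqOn f 0 V :=
    Measure.eqOn_open_of_ae_eq h hV (hf.continuousOn.mono hVU) continuousOn_const
  exact hf.eqOn_zero_of_preconnected_of_eventuallyEq_zero hU (hVU hz)
    (eventuallyEq_of_mem (hV.mem_nhds hz) hV0)

theorem tendsto_exp_mul_mul_rpow_mul_log_rpow_atTop {β g r : ℝ}
    (h : β < 0 ∨ β = 0 ∧ (g < 0 ∨ g = 0 ∧ r < 0)) :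
    Tendsto (fun x => rexp (β * x) * x ^ g * log x ^ r) atTop (𝓝 0) := by
  have habsorb (ε : ℝ) (hε : 0 < ε) :
      (fun x => rexp (β * x) * x ^ g * log x ^ r) =o[atTop]
        fun x => rexp (β * x) * x ^ (g + ε) := by
    refine ((isBigO_refl (fun x => rexp (β * x) * x ^ g) atTop).mul_isLittleO
      (isLittleO_log_rpow_rpow_atTop r hε)).congr' EventuallyEq.rfl ?_
    filter_upwards [eventually_gt_atTop 0] with x hx
    rw [rpow_add hx, mul_assoc]
  rcases h with hβ | ⟨rfl, hg | ⟨rfl, hr⟩⟩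
  · refine (habsorb 1 one_pos).trans_tendsto ?_
    simpa [mul_comm] using
      tendsto_rpow_mul_exp_neg_mul_atTop_nhds_zero (g + 1) (-β) (by linarith)
  · refine (habsorb (-g / 2) (by linarith)).trans_tendsto ?_
    simpa [show g + -g / 2 = -(-g / 2) by ring] using
      tendsto_rpow_neg_atTop (y := -g / 2) (by linarith)
  · simpa [comp_def] using (tendsto_rpow_neg_atTop (neg_pos.2 hr)).comp tendsto_log_atTop

noncomputable def expMonomial (t : ℝ ×ₗ ℝ ×ₗ ℕ) (x : ℝ) : ℝ :=
  rexp ((ofLex t).1 * x) * x ^ (ofLex (ofLex t).2).1 * log x ^ (ofLex (ofLex t).2).2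

theorem expMonomial_pos (t : ℝ ×ₗ ℝ ×ₗ ℕ) {x : ℝ} (hx : 1 < x) : 0 < expMonomial t x := by
  have := log_pos hx
  unfold expMonomial
  positivity

theorem isLittleO_expMonomial {s t : ℝ ×ₗ ℝ ×ₗ ℕ} (hst : s < t) :
    expMonomial s =o[atTop] expMonomial t := by
  rw [isLittleO_iff_tendsto' ((eventually_gt_atTop 1).mono
    fun x hx h => absurd h (expMonomial_pos t hx).ne')]
  have hord : (ofLex s).1 - (ofLex t).1 < 0 ∨ (ofLex s).1 - (ofLex t).1 = 0 ∧
      ((ofLex (ofLex s).2).1 - (ofLex (ofLex t).2).1 < 0 ∨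
        (ofLex (ofLex s).2).1 - (ofLex (ofLex t).2).1 = 0 ∧
          ((ofLex (ofLex s).2).2 : ℝ) - (ofLex (ofLex t).2).2 < 0) := by
    simpa [Prod.Lex.lt_iff, sub_eq_zero] using hst
  refine (tendsto_exp_mul_mul_rpow_mul_log_rpow_atTop hord).congr' ?_
  filter_upwards [eventually_gt_atTop 1] with x hx
  have hlog := log_pos hx
  simp only [expMonomial, sub_mul, exp_sub, rpow_sub (zero_lt_one.trans hx), rpow_sub hlog,
    rpow_natCast]
  field_simp

theorem frequently_expMonomial_ne_zero (t : ℝ ×ₗ ℝ ×ₗ ℕ) :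
    ∃ᶠ x in atTop, expMonomial t x ≠ 0 :=
  ((eventually_gt_atTop 1).mono fun _ hx => (expMonomial_pos t hx).ne').frequently

section AsymptoticScale

variable {α ι : Type*} [LinearOrder ι] {l : Filter α} {M : ι → α → ℝ}

theorem eq_zero_of_sum_mul_eventually_eq_zero (hM : ∀ s t, s < t → M s =o[l] M t)
    (hne : ∀ t, ∃ᶠ x in l, M t x ≠ 0) (S : Finset ι) {w : ι → ℝ}
    (h : ∀ᶠ x in l, ∑ t ∈ S, w t * M t x = 0) : ∀ t ∈ S, w t = 0 := by
  classical
  induction S using Finset.induction_on_max generalizing w with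
  | empty => simp
  | insert a S ha ih =>
    have hlower : (fun x => ∑ t ∈ S, w t * M t x) =o[l] M a :=
      IsLittleO.fun_sum fun t ht => (hM t a (ha t ht)).const_mul_left (w t)
    have htop : (fun x => w a * M a x) =o[l] M a := by
      refine hlower.neg_left.congr' ?_ EventuallyEq.rfl
      filter_upwards [h] with x hx
      rw [Finset.sum_insert fun haS => (ha a haS).false] at hx
      linarith
    have hwa : w a = 0 := by
      by_contra hwa
      exact isLittleO_irrefl (hne a) ((isLittleO_const_mul_left_iff hwa).1 htop)
    intro t ht
    rcases Finset.mem_insert.1 ht with rfl | ht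
    · exact hwa
    refine ih ?_ t ht
    filter_upwards [h] with x hx
    simpa [Finset.sum_insert fun haS => (ha a haS).false, hwa] using hx

theorem sum_mul_comp_eq_zero_of_sum_mul_eventually_eq_zero
    (hM : ∀ s t, s < t → M s =o[l] M t) (hne : ∀ t, ∃ᶠ x in l, M t x ≠ 0)
    {J : Type*} [Fintype J] {τ : J → ι} {v : J → ℝ}
    (h : ∀ᶠ x in l, ∑ j, v j * M (τ j) x = 0) (φ : ι → ℝ) : ∑ j, v j * φ (τ j) = 0 := by
  classical
  have hfiber (f : ι → ℝ) : ∑ j, v j * f (τ j) =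
      ∑ t ∈ Finset.univ.image τ, (∑ j with τ j = t, v j) * f t := by
    rw [← Finset.sum_fiberwise_of_maps_to
      fun j _ => Finset.mem_image_of_mem τ (Finset.mem_univ j)]
    refine Finset.sum_congr rfl fun t _ => ?_
    rw [Finset.sum_mul]
    exact Finset.sum_congr rfl fun j hj => by rw [(Finset.mem_filter.1 hj).2]
  have hw := eq_zero_of_sum_mul_eventually_eq_zero hM hne (Finset.univ.image τ)
    (w := fun t => ∑ j with τ j = t, v j) (h.mono fun x hx => (hfiber (M · x)).symm.trans hx)
  rw [hfiber]
  exact Finset.sum_eq_zero fun t ht => by rw [hw t ht, zero_mul]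

end AsymptoticScale

theorem rpowSum_eq_zero_of_sum_eventually_eq_zero {ι : Type*} [Fintype ι] {κ κ' : ι → Type*}
    [∀ i, Fintype (κ i)] [∀ i, Fintype (κ' i)] {b : ι → ℝ} (hb : Injective b)
    {a γ : ∀ i, κ i → ℝ} {c δ : ∀ i, κ' i → ℝ}
    (h : ∀ᶠ x in atTop,
      ∑ i, (rpowSum (a i) (γ i) x + rpowSum (c i) (δ i) x * log x) * rexp (b i * x) = 0)
    (i : ι) : rpowSum (a i) (γ i) = 0 ∧ rpowSum (c i) (δ i) = 0 := by
  classical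
  let τ : (Σ i, κ i ⊕ κ' i) → ℝ ×ₗ ℝ ×ₗ ℕ := fun p =>
    p.2.elim (fun j => toLex (b p.1, toLex (γ p.1 j, 0)))
      (fun j => toLex (b p.1, toLex (δ p.1 j, 1)))
  let v : (Σ i, κ i ⊕ κ' i) → ℝ := fun p => p.2.elim (a p.1) (c p.1)
  have hsum : ∀ᶠ x in atTop, ∑ p, v p * expMonomial (τ p) x = 0 := by
    filter_upwards [h] with x hx
    rw [← hx]
    simp only [Fintype.sum_sigma, Fintype.sum_sum_type, τ, v, Sum.elim_inl, Sum.elim_inr,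
      expMonomial, ofLex_toLex, rpowSum, add_mul, Finset.sum_mul]
    congr! 3 <;> ring
  have hzero := sum_mul_comp_eq_zero_of_sum_mul_eventually_eq_zero
    (fun _ _ => isLittleO_expMonomial) frequently_expMonomial_ne_zero hsum
  -- Testing against `x ^ g` on the slice `β = b i`, `e = n` (and `0` elsewhere) singles out
  -- `hᵢ x` for `n = 0` and `gᵢ x` for `n = 1`; injectivity of `b` discards the other `i'`.
  have hslice (n : ℕ) (x : ℝ) := hzero fun t =>
    if (ofLex t).1 = b i ∧ (ofLex (ofLex t).2).2 = n then x ^ (ofLex (ofLex t).2).1 else 0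
  constructor <;> funext x
  · simpa [τ, v, Fintype.sum_sigma, Fintype.sum_sum_type, hb.eq_iff, rpowSum] using hslice 0 x
  · simpa [τ, v, Fintype.sum_sigma, Fintype.sum_sum_type, hb.eq_iff, rpowSum] using hslice 1 x

theorem stmt_10_general (k : ℕ) (b : Fin k → ℝ) (hb : StrictMono b)
    (m m' : Fin k → ℕ)
    (a : (i : Fin k) → Fin (m i) → ℝ) (γ : (i : Fin k) → Fin (m i) → ℝ)
    (c : (i : Fin k) → Fin (m' i) → ℝ) (δ : (i : Fin k) → Fin (m' i) → ℝ)
    (lo hi : ℝ) (hlo : 0 < lo) (hlh : lo < hi)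
    (hzero : ∀ᵐ x ∂(volume.restrict (Set.Ioo lo hi)),
        ∑ i, ((∑ j, a i j * x ^ (γ i j)) + (∑ j, c i j * x ^ (δ i j)) * Real.log x)
            * Real.exp (b i * x) = 0) :
    ∀ x : ℝ, x ≠ 0 → ∀ i,
      (∑ j, a i j * x ^ (γ i j)) = 0 ∧ (∑ j, c i j * x ^ (δ i j)) = 0 := by
  let F : ℝ → ℝ := fun x =>
    ∑ i, (rpowSum (a i) (γ i) x + rpowSum (c i) (δ i) x * log x) * rexp (b i * x)
  have hF : AnalyticOnNhd ℝ F (Ioi 0) := fun x hx =>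
    Finset.analyticAt_fun_sum _ fun i _ =>
      ((analyticAt_rpowSum _ _ hx).add ((analyticAt_rpowSum _ _ hx).mul (analyticAt_log hx))).mul
        (analyticAt_const.mul analyticAt_id).rexp
  have hF0 : EqOn F 0 (Ioi 0) :=
    hF.eqOn_zero_of_ae_eq_zero (convex_Ioi 0).isPreconnected isOpen_Ioo (nonempty_Ioo.2 hlh)
      (fun y hy => hlo.trans hy.1) hzero
  intro x _ i
  obtain ⟨ha, hc⟩ := rpowSum_eq_zero_of_sum_eventually_eq_zero hb.injective
    ((eventually_gt_atTop 0).mono fun y hy => hF0 hy) i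
  exact ⟨congrFun ha x, congrFun hc x⟩

/-- Linear independence of (generalized power sums) + (generalized power sums)·ln x times
exponentials with strictly increasing rates: if
`∑ᵢ (hᵢ(x) + gᵢ(x) ln x) e^{bᵢ x} = 0` a.e. on a nonempty interval `(lo,hi) ⊂ (0,∞)`,
where `hᵢ(x) = ∑ⱼ aᵢⱼ x^{γᵢⱼ}` and `gᵢ(x) = ∑ⱼ cᵢⱼ x^{δᵢⱼ}`, then `hᵢ(x) = gᵢ(x) = 0`
for every `x ≠ 0` and every `i`. -/
theorem stmt_10 (k : ℕ) (hk : 0 < k) (b : Fin k → ℝ) (hb : StrictMono b)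
    (m m' : Fin k → ℕ)
    (a : (i : Fin k) → Fin (m i) → ℝ) (γ : (i : Fin k) → Fin (m i) → ℝ)
    (c : (i : Fin k) → Fin (m' i) → ℝ) (δ : (i : Fin k) → Fin (m' i) → ℝ)
    (lo hi : ℝ) (hlo : 0 < lo) (hlh : lo < hi)
    (hzero : ∀ᵐ x ∂(volume.restrict (Set.Ioo lo hi)),
        ∑ i, ((∑ j, a i j * x ^ (γ i j)) + (∑ j, c i j * x ^ (δ i j)) * Real.log x)
            * Real.exp (b i * x) = 0) :
    ∀ x : ℝ, x ≠ 0 → ∀ i,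
      (∑ j, a i j * x ^ (γ i j)) = 0 ∧ (∑ j, c i j * x ^ (δ i j)) = 0 :=
  stmt_10_general k b hb m m' a γ c δ lo hi hlo hlh hzero
end

section
/- Let $f: \mathbb{R} \to [0,U]$ be Lebesgue measurable with $\int_{\mathbb{R}} f(x)\,dx = E \in (0,\infty)$. Then for any $b \in \mathbb{R}$, $\int_{\mathbb{R}} (x-b)^2 f(x)\,dx \geq \frac{E^3}{12 U^2}$, with equality if and only if $f(x) = U \cdot \mathbf{1}_{[b - E/(2U),\, b + E/(2U)]}(x)$ for almost every $x$. -/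
/-! Bathtub principle. Put `r = E / (2U)`, `I = U · 1_[b-r, b+r]` and `w x = (x - b)²`. The
pointwise identity `w f + r² I = w I + r² f + (w - r²)(f - I)`, whose last term is nonnegative
because `f ≤ U` on the interval and `f ≥ 0` off it, integrates (`f` and `I` having the same finite
mass) to `∫ w f = ∫ w I + ∫ (w - r²)(f - I)`, and `∫ w I = E³ / (12 U²)`. The defect vanishes iff
`f = I` a.e., since `w ≠ r²` away from the two endpoints. -/

open MeasureTheory

section Exchange

variable {α : Type*} [MeasurableSpace α] {μ : Measure α}

theorem lintegral_ofReal_weight_mul_eq_add {w f g : α → ℝ} {t : ℝ}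
    (hw : Measurable w) (hf : Measurable f) (hg : Measurable g)
    (hw0 : ∀ x, 0 ≤ w x) (hf0 : ∀ x, 0 ≤ f x) (hg0 : ∀ x, 0 ≤ g x) (ht : 0 ≤ t)
    (hsign : ∀ x, 0 ≤ (w x - t) * (f x - g x))
    (hmass : ∫⁻ x, ENNReal.ofReal (f x) ∂μ = ∫⁻ x, ENNReal.ofReal (g x) ∂μ)
    (hfin : ∫⁻ x, ENNReal.ofReal (g x) ∂μ ≠ ⊤) :
    ∫⁻ x, ENNReal.ofReal (w x * f x) ∂μ =
      ∫⁻ x, ENNReal.ofReal (w x * g x) ∂μ +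
        ∫⁻ x, ENNReal.ofReal ((w x - t) * (f x - g x)) ∂μ := by
  have hpt : ∀ x, ENNReal.ofReal (w x * f x) + ENNReal.ofReal t * ENNReal.ofReal (g x) =
      ENNReal.ofReal (w x * g x) + ENNReal.ofReal ((w x - t) * (f x - g x)) +
        ENNReal.ofReal t * ENNReal.ofReal (f x) := by
    intro x
    have hwf := mul_nonneg (hw0 x) (hf0 x)
    have hwg := mul_nonneg (hw0 x) (hg0 x)
    rw [← ENNReal.ofReal_mul ht, ← ENNReal.ofReal_mul ht,
      ← ENNReal.ofReal_add hwf (mul_nonneg ht (hg0 x)), ← ENNReal.ofReal_add hwg (hsign x),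
      ← ENNReal.ofReal_add (add_nonneg hwg (hsign x)) (mul_nonneg ht (hf0 x))]
    congr 1
    ring
  have hint := lintegral_congr (μ := μ) hpt
  rw [lintegral_add_left (by fun_prop), lintegral_add_right _ (by fun_prop),
    lintegral_add_left (by fun_prop), lintegral_const_mul _ hf.ennreal_ofReal,
    lintegral_const_mul _ hg.ennreal_ofReal, hmass] at hint
  exact ENNReal.add_left_inj (ENNReal.mul_ne_top ENNReal.ofReal_ne_top hfin) |>.1 hint

theorem lintegral_ofReal_eq_zero_iff_ae_eq_zero {D : α → ℝ} (hD : Measurable D)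
    (hD0 : ∀ x, 0 ≤ D x) : ∫⁻ x, ENNReal.ofReal (D x) ∂μ = 0 ↔ D =ᵐ[μ] 0 := by
  rw [lintegral_eq_zero_iff hD.ennreal_ofReal]
  refine Filter.eventually_congr (Filter.Eventually.of_forall fun x => ?_)
  simp only [Pi.zero_apply, ENNReal.ofReal_eq_zero]
  exact ⟨fun h => le_antisymm h (hD0 x), le_of_eq⟩

theorem mul_sub_ae_eq_zero_iff {w f g : α → ℝ} (hw : ∀ᵐ x ∂μ, w x ≠ 0) :
    (fun x => w x * (f x - g x)) =ᵐ[μ] 0 ↔ f =ᵐ[μ] g := by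
  refine ⟨fun h => ?_, fun h => ?_⟩
  · filter_upwards [h, hw] with x hx hwx
    exact sub_eq_zero.1 ((mul_eq_zero.1 hx).resolve_left hwx)
  · filter_upwards [h] with x hx
    rw [Pi.zero_apply, hx, sub_self, mul_zero]

end Exchange

theorem sq_sub_sq_mul_sub_indicator_Icc_nonneg {f : ℝ → ℝ} {U b r : ℝ}
    (hf0 : ∀ x, 0 ≤ f x) (hfU : ∀ x, f x ≤ U) (hr : 0 ≤ r) (x : ℝ) :
    0 ≤ ((x - b) ^ 2 - r ^ 2) * (f x - (Set.Icc (b - r) (b + r)).indicator (fun _ => U) x) := by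
  by_cases hx : x ∈ Set.Icc (b - r) (b + r)
  · rw [Set.indicator_of_mem hx]
    have : (x - b) ^ 2 ≤ r ^ 2 := sq_le_sq' (by linarith [hx.1]) (by linarith [hx.2])
    exact mul_nonneg_of_nonpos_of_nonpos (by linarith) (by linarith [hfU x])
  · rw [Set.indicator_of_notMem hx, sub_zero]
    have : r ^ 2 ≤ (x - b) ^ 2 := by
      rw [Set.mem_Icc, not_and_or, not_le, not_le] at hx
      rcases hx with h | h <;> nlinarith
    exact mul_nonneg (by linarith) (hf0 x)

theorem ae_sq_sub_sq_ne_zero (b r : ℝ) : ∀ᵐ x : ℝ, (x - b) ^ 2 - r ^ 2 ≠ 0 := by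
  refine measure_mono_null (fun x hx => ?_) ((Set.toFinite {b - r, b + r}).measure_zero volume)
  rcases sq_eq_sq_iff_eq_or_eq_neg.1 (sub_eq_zero.1 (not_not.1 hx)) with h | h
  · exact Or.inr (by rw [Set.mem_singleton_iff]; linarith)
  · exact Or.inl (by linarith)

theorem lintegral_ofReal_indicator_Icc_const {U : ℝ} (hU : 0 ≤ U) (a c : ℝ) :
    ∫⁻ x, ENNReal.ofReal ((Set.Icc a c).indicator (fun _ => U) x) =
      ENNReal.ofReal (U * (c - a)) := by
  rw [Set.comp_indicator_const U ENNReal.ofReal ENNReal.ofReal_zero,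
    lintegral_indicator measurableSet_Icc, setLIntegral_const,
    Real.volume_Icc, ← ENNReal.ofReal_mul hU]

theorem lintegral_ofReal_sq_sub_mul_indicator_Icc {U : ℝ} (hU : 0 ≤ U) (b : ℝ) {r : ℝ}
    (hr : 0 ≤ r) :
    ∫⁻ x, ENNReal.ofReal ((x - b) ^ 2 * (Set.Icc (b - r) (b + r)).indicator (fun _ => U) x) =
      ENNReal.ofReal (2 * U * r ^ 3 / 3) := by
  have hind : ∀ x, (x - b) ^ 2 * (Set.Icc (b - r) (b + r)).indicator (fun _ => U) x =
      (Set.Icc (b - r) (b + r)).indicator (fun x => (x - b) ^ 2 * U) x := by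
    intro x
    by_cases hx : x ∈ Set.Icc (b - r) (b + r) <;> simp [hx]
  have hint : ∫ x in Set.Icc (b - r) (b + r), (x - b) ^ 2 * U = 2 * U * r ^ 3 / 3 := by
    rw [integral_Icc_eq_integral_Ioc, ← intervalIntegral.integral_of_le (by linarith),
      intervalIntegral.integral_mul_const,
      intervalIntegral.integral_comp_sub_right (fun x => x ^ 2) b, integral_pow]
    ring
  simp_rw [hind]
  rw [← ofReal_integral_eq_lintegral_ofReal, integral_indicator measurableSet_Icc, hint]
  · exact (Continuous.integrableOn_Icc (by fun_prop)).integrable_indicator measurableSet_Icc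
  · exact Filter.Eventually.of_forall
      (Set.indicator_nonneg fun x _ => mul_nonneg (sq_nonneg _) hU)

/-- Among measurable `f : ℝ → [0,U]` with total mass `E`, the second moment about `b`
is at least `E³/(12U²)`, with equality iff `f` is a.e. the uniform density `U` on the
interval of length `E/U` centered at `b`. -/
theorem stmt_11 (U E b : ℝ) (hU : 0 < U) (hE : 0 < E)
    (f : ℝ → ℝ) (hf : Measurable f) (hf0 : ∀ x, 0 ≤ f x) (hfU : ∀ x, f x ≤ U)
    (hmass : ∫⁻ x, ENNReal.ofReal (f x) ∂volume = ENNReal.ofReal E) :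
    ENNReal.ofReal (E ^ 3 / (12 * U ^ 2)) ≤
        ∫⁻ x, ENNReal.ofReal ((x - b) ^ 2 * f x) ∂volume ∧
      ((∫⁻ x, ENNReal.ofReal ((x - b) ^ 2 * f x) ∂volume)
            = ENNReal.ofReal (E ^ 3 / (12 * U ^ 2)) ↔
        f =ᵐ[volume]
          (Set.Icc (b - E / (2 * U)) (b + E / (2 * U))).indicator fun _ => U) := by
  set r := E / (2 * U) with hr_def
  have hr : 0 ≤ r := by positivity
  have hUr : 2 * U * r = E := by rw [hr_def]; field_simp
  set I := (Set.Icc (b - r) (b + r)).indicator fun _ => U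
  have hImass : ∫⁻ x, ENNReal.ofReal (I x) = ENNReal.ofReal E := by
    rw [lintegral_ofReal_indicator_Icc_const hU.le]
    congr 1
    linear_combination hUr
  have hImoment : ∫⁻ x, ENNReal.ofReal ((x - b) ^ 2 * I x) =
      ENNReal.ofReal (E ^ 3 / (12 * U ^ 2)) := by
    rw [lintegral_ofReal_sq_sub_mul_indicator_Icc hU.le b hr, ← hUr]
    congr 1
    field_simp
    ring
  have hI : Measurable I := measurable_const.indicator measurableSet_Icc
  have hsign := sq_sub_sq_mul_sub_indicator_Icc_nonneg hf0 hfU hr (b := b)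
  have hsplit := lintegral_ofReal_weight_mul_eq_add (w := fun x => (x - b) ^ 2) (t := r ^ 2)
    (by fun_prop) hf hI (fun x => sq_nonneg _) hf0 (Set.indicator_nonneg fun _ _ => hU.le)
    (sq_nonneg r) hsign (hmass.trans hImass.symm) (hImass ▸ ENNReal.ofReal_ne_top)
  rw [hImoment] at hsplit
  refine ⟨hsplit ▸ le_self_add, ?_⟩
  have hdefect : Measurable fun x => ((x - b) ^ 2 - r ^ 2) * (f x - I x) := by fun_prop
  rw [hsplit, ← mul_sub_ae_eq_zero_iff (ae_sq_sub_sq_ne_zero b r),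
    ← lintegral_ofReal_eq_zero_iff_ae_eq_zero hdefect hsign]
  conv_lhs => rhs; rw [← add_zero (ENNReal.ofReal _)]
  exact ENNReal.add_right_inj ENNReal.ofReal_ne_top
end

section
/- Let $1 \leq j_1 < j_2 < \cdots < j_d$ be integers and define $A(x) \in \mathbb{R}^{d \times d}$ by $A_{\alpha\beta}(x) = 0$ for $\alpha > \beta$ and $A_{\alpha\beta}(x) = \frac{j_\beta!}{(j_\beta - j_\alpha)!} x^{j_\beta - j_\alpha}$ for $\alpha \leq \beta$ (with the convention $j_\alpha! / 0! \cdot x^0$ on the diagonal). Then there is a constant $c_3 > 0$ depending only on $d, j_1, \ldots, j_d$ such that the smallest singular value satisfies $S_{\min}(A(x)) \geq c_3 \max\{1, |x|\}^{-(j_d - j_1)(d-1)}$ for all $x \in \mathbb{R}$. -/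
/-!
`A(x)` is upper triangular with determinant `∏ (j_i)!`, independent of `x`, and its entries are
`O(max(1,|x|)^(j_d - j_1))`. By Cramer's rule every entry of `A(x)⁻¹` is a `(d-1)`-minor of `A(x)`
divided by that constant determinant, hence `O(max(1,|x|)^((j_d - j_1)(d-1)))`; a matrix with
entries bounded by `B` has Euclidean operator norm at most `dB`, so `‖v‖ = ‖A⁻¹ A v‖` is at most a
constant times `max(1,|x|)^((j_d - j_1)(d-1)) ‖A v‖`.
-/

open scoped Nat

namespace Matrix

variable {n : Type*} [Fintype n] [DecidableEq n]

theorem norm_toEuclideanLin_le_of_abs_le (M : Matrix n n ℝ) {B : ℝ} (hB : 0 ≤ B)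
    (h : ∀ i k, |M i k| ≤ B) (v : EuclideanSpace ℝ n) :
    ‖toEuclideanLin M v‖ ≤ Fintype.card n * B * ‖v‖ := by
  have hrow (i : n) : (toEuclideanLin M v i) ^ 2 ≤ Fintype.card n * B ^ 2 * ‖v‖ ^ 2 :=
    calc (∑ k, M i k * v k) ^ 2 ≤ (∑ k, M i k ^ 2) * ∑ k, v k ^ 2 :=
          Finset.sum_mul_sq_le_sq_mul_sq _ _ _
      _ ≤ (∑ _k : n, B ^ 2) * ‖v‖ ^ 2 := by
          rw [EuclideanSpace.real_norm_sq_eq]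
          refine mul_le_mul_of_nonneg_right (Finset.sum_le_sum fun k _ => ?_) (by positivity)
          exact sq_le_sq.2 ((h i k).trans (le_abs_self B))
      _ = Fintype.card n * B ^ 2 * ‖v‖ ^ 2 := by simp
  refine (pow_le_pow_iff_left₀ (norm_nonneg _) (by positivity) two_ne_zero).1 ?_
  calc ‖toEuclideanLin M v‖ ^ 2 ≤ ∑ _i : n, Fintype.card n * B ^ 2 * ‖v‖ ^ 2 := by
        rw [EuclideanSpace.real_norm_sq_eq]
        exact Finset.sum_le_sum fun i _ => hrow i
    _ = (Fintype.card n * B * ‖v‖) ^ 2 := by simp; ring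

theorem norm_le_mul_norm_toEuclideanLin_of_abs_inv_le {M : Matrix n n ℝ} (hM : IsUnit M.det)
    {B : ℝ} (hB : 0 ≤ B) (h : ∀ i k, |M⁻¹ i k| ≤ B) (v : EuclideanSpace ℝ n) :
    ‖v‖ ≤ Fintype.card n * B * ‖toEuclideanLin M v‖ := by
  have hv : toEuclideanLin M⁻¹ (toEuclideanLin M v) = v := by
    ext i
    simp [mulVec_mulVec, nonsing_inv_mul _ hM]
  calc ‖v‖ = ‖toEuclideanLin M⁻¹ (toEuclideanLin M v)‖ := by rw [hv]
    _ ≤ _ := norm_toEuclideanLin_le_of_abs_le _ hB h _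

theorem abs_inv_apply_le_of_abs_le {K : Type*} [Field K] [LinearOrder K] [IsStrictOrderedRing K]
    {d : ℕ} (M : Matrix (Fin d) (Fin d) K) {E : K} (h : ∀ i k, |M i k| ≤ E) (i k : Fin d) :
    |M⁻¹ i k| ≤ (d - 1)! * E ^ (d - 1) / |M.det| := by
  cases d with
  | zero => exact i.elim0
  | succ m =>
    have hadj : |adjugate M i k| ≤ m ! * E ^ m := by
      rw [adjugate_fin_succ_eq_det_submatrix, abs_mul, abs_pow, abs_neg, abs_one, one_pow,
        one_mul]
      simpa using det_le (A := M.submatrix k.succAbove i.succAbove) (abv := AbsoluteValue.abs)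
        fun _ _ => h _ _
    rw [inv_def, Ring.inverse_eq_inv', smul_apply, smul_eq_mul, abs_mul, abs_inv, div_eq_inv_mul]
    exact mul_le_mul_of_nonneg_left hadj (inv_nonneg.2 (abs_nonneg _))

end Matrix

open Matrix

/-- Entry `(α, β)` is the `j α`-th derivative of `x ^ j β`. -/
noncomputable def monomialDerivMatrix {d : ℕ} (j : Fin d → ℕ) (x : ℝ) :
    Matrix (Fin d) (Fin d) ℝ :=
  of fun α β => if β.val < α.val then 0
    else ((Nat.factorial (j β) : ℝ) / (Nat.factorial (j β - j α) : ℝ)) * x ^ (j β - j α)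

section monomialDerivMatrix

variable {d : ℕ} (j : Fin d → ℕ) (x : ℝ)

theorem isUpperTriangular_monomialDerivMatrix : (monomialDerivMatrix j x).IsUpperTriangular :=
  fun _ _ h => if_pos h

theorem det_monomialDerivMatrix : (monomialDerivMatrix j x).det = ∏ i, ((j i)! : ℝ) := by
  rw [det_of_isUpperTriangular (isUpperTriangular_monomialDerivMatrix j x)]
  simp [monomialDerivMatrix]

theorem abs_monomialDerivMatrix_apply_le {lo hi : ℕ} (hlo : ∀ α, lo ≤ j α) (hhi : ∀ β, j β ≤ hi)
    (α β : Fin d) : |monomialDerivMatrix j x α β| ≤ hi ! * max 1 |x| ^ (hi - lo) := by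
  have hfac : ((j β)! / (j β - j α)! : ℝ) ≤ hi ! :=
    (div_le_self (by positivity) (mod_cast (j β - j α).factorial_pos)).trans
      (mod_cast Nat.factorial_le (hhi β))
  have hpow : |x| ^ (j β - j α) ≤ max 1 |x| ^ (hi - lo) :=
    (pow_le_pow_left₀ (abs_nonneg x) (le_max_right 1 |x|) _).trans
      (pow_le_pow_right₀ (le_max_left 1 |x|) (by have := hlo α; have := hhi β; omega))
  rw [monomialDerivMatrix, of_apply]
  split_ifs
  · simp
  · rw [abs_mul, abs_pow, abs_of_nonneg (by positivity)]
    exact mul_le_mul hfac hpow (by positivity) (by positivity)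

theorem norm_le_mul_norm_toEuclideanLin_monomialDerivMatrix (hd : 0 < d) {lo hi : ℕ}
    (hlo : ∀ α, lo ≤ j α) (hhi : ∀ β, j β ≤ hi) (v : EuclideanSpace ℝ (Fin d)) :
    ‖v‖ ≤ d ! * hi ! ^ (d - 1) / (∏ i, ((j i)! : ℝ)) * max 1 |x| ^ ((hi - lo) * (d - 1)) *
      ‖toEuclideanLin (monomialDerivMatrix j x) v‖ := by
  have hdet : 0 < (monomialDerivMatrix j x).det := by
    rw [det_monomialDerivMatrix]
    positivity
  have hinv := abs_inv_apply_le_of_abs_le _ (abs_monomialDerivMatrix_apply_le j x hlo hhi)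
  rw [abs_of_pos hdet, det_monomialDerivMatrix] at hinv
  refine (norm_le_mul_norm_toEuclideanLin_of_abs_inv_le hdet.ne'.isUnit (by positivity) hinv
    v).trans_eq ?_
  rw [Fintype.card_fin, ← Nat.mul_factorial_pred hd.ne', mul_pow, ← pow_mul]
  push_cast
  ring

end monomialDerivMatrix

/-- Lower bound on the smallest singular value of the upper triangular matrix
`A(x)` with entries `A_{αβ}(x) = j_β!/(j_β - j_α)! · x^{j_β - j_α}` for `α ≤ β`:
there is `c₃ > 0` depending only on `d, j₁,…,j_d` such that
`S_min(A(x)) ≥ c₃ max{1,|x|}^{-(j_d - j₁)(d-1)}` for all `x ∈ ℝ`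
(equivalently, `‖A(x)v‖ ≥ c₃ max{1,|x|}^{-(j_d-j₁)(d-1)} ‖v‖` for all `v`). -/
theorem stmt_14 (d : ℕ) (hd : 0 < d) (j : Fin d → ℕ)
    (hjmono : StrictMono j) :
    ∃ c3 : ℝ, 0 < c3 ∧
      ∀ x : ℝ, ∀ v : EuclideanSpace ℝ (Fin d),
        c3 / (max 1 |x|) ^ ((j ⟨d - 1, by omega⟩ - j ⟨0, hd⟩) * (d - 1)) * ‖v‖ ≤
          ‖Matrix.toEuclideanLin
              (Matrix.of fun α β : Fin d =>
                if β.val < α.val then (0 : ℝ)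
                else ((Nat.factorial (j β) : ℝ) / (Nat.factorial (j β - j α) : ℝ)) *
                  x ^ (j β - j α)) v‖ := by
  have hlo (α : Fin d) : j ⟨0, hd⟩ ≤ j α :=
    hjmono.monotone (Fin.mk_le_of_le_val (Nat.zero_le _))
  have hhi (β : Fin d) : j β ≤ j ⟨d - 1, by omega⟩ :=
    hjmono.monotone (Fin.le_iff_val_le_val.2 (Nat.le_sub_one_of_lt β.isLt))
  set K : ℝ := d ! * (j ⟨d - 1, by omega⟩)! ^ (d - 1) / ∏ i, ((j i)! : ℝ)
  have hK : 0 < K := by positivity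
  refine ⟨K⁻¹, inv_pos.2 hK, fun x v => ?_⟩
  change _ ≤ ‖toEuclideanLin (monomialDerivMatrix j x) v‖
  have hv := norm_le_mul_norm_toEuclideanLin_monomialDerivMatrix j x hd hlo hhi v
  rw [div_mul_eq_mul_div, div_le_iff₀ (pow_pos (lt_max_of_lt_left one_pos) _), inv_mul_eq_div,
    div_le_iff₀ hK]
  exact hv.trans_eq (by simp only [K]; ring)
end

section
/- Let $f(x|\theta) = \frac{1}{\theta}\mathbf{1}_{(0,\theta)}(x)$ be the uniform density family on $\Theta = (0,\infty)$ with respect to Lebesgue measure, and fix $G_0 = \sum_{i=1}^{k_0} p_i^0 \delta_{\theta_i^0} \in \mathcal{E}_{k_0}(\Theta)$ with distinct atoms and positive weights. Then $\liminf_{G \overset{W_1}{\to} G_0,\, G \in \mathcal{E}_{k_0}(\Theta)} \frac{V(P_G, P_{G_0})}{D_1(G,G_0)} > 0$, where $P_G$ has density $p_G(x) = \sum_i p_i f(x|\theta_i)$ and $V$ is total variation distance. -/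
/-!
A coupling of small transport cost forces every atom `θ⁰ᵢ` to carry a unique atom of `G` within
distance `r`, which gives the relabelling `τ` and makes the weights close as well. Near `G₀` the
two densities are step functions on `(0, ∞)` with jumps `pᵢ/θᵢ` at the atoms, so on the window
`(θ⁰ᵢ - 3r, θ⁰ᵢ + 3r)` their difference equals a plateau value `Rᵢ` to the right of both `θᵢ`
and `θ⁰ᵢ`, equals `Rᵢ + pᵢ/θᵢ - p⁰ᵢ/θ⁰ᵢ` to the left of both, and has modulus at least
`min (pᵢ/θᵢ) (p⁰ᵢ/θ⁰ᵢ) - |Rᵢ|` in between. The two plateaus bound the jump difference, the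
middle interval bounds `|θᵢ - θ⁰ᵢ|` unless `|Rᵢ|` is large, in which case `|Rᵢ|` alone pays for
it; finally `pᵢ - p⁰ᵢ = θᵢ (pᵢ/θᵢ - p⁰ᵢ/θ⁰ᵢ) + (p⁰ᵢ/θ⁰ᵢ)(θᵢ - θ⁰ᵢ)`.
-/

open MeasureTheory Finset

lemma exists_pos_forall_le {ι : Type*} [Finite ι] {x : ι → ℝ} (hx : ∀ i, 0 < x i) :
    ∃ ε > 0, ∀ i, ε ≤ x i :=
  ((Filter.eventually_all.2 fun i => nhdsWithin_le_nhds (eventually_le_nhds (hx i))).and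
    (self_mem_nhdsWithin : Set.Ioi (0 : ℝ) ∈ nhdsWithin 0 (Set.Ioi 0))).exists.imp
    fun _ h => ⟨h.2, h.1⟩

lemma abs_sub_le_mul_abs_div_sub_div {a b P p : ℝ} (ha : 0 < a) (hb : 0 < b) (hp : 0 ≤ p) :
    |P - p| ≤ b * |P / b - p / a| + p / a * |b - a| := by
  have key : P - p = b * (P / b - p / a) + p / a * (b - a) := by field_simp; ring
  calc |P - p| ≤ |b * (P / b - p / a)| + |p / a * (b - a)| := key ▸ abs_add_le _ _
    _ = _ := by rw [abs_mul, abs_mul, abs_of_pos hb, abs_of_nonneg (div_nonneg hp ha.le)]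

lemma min_mul_add_add_le {r q u v β : ℝ} (hr : 0 ≤ r) (hu : 0 ≤ u) (hv : 0 ≤ v)
    (hβ : 0 ≤ β) (hβr : β ≤ r) :
    min r (q / 2) * (u + v + β) ≤ 2 * r * v + 2 * r * u + max (q - u) 0 * β := by
  have hm : min r (q / 2) ≤ r := min_le_left _ _
  have hm' : min r (q / 2) ≤ q / 2 := min_le_right _ _
  rcases le_or_gt u (q / 2) with hu' | hu'
  · have : min r (q / 2) * β ≤ max (q - u) 0 * β :=
      mul_le_mul_of_nonneg_right (hm'.trans (by linarith [le_max_left (q - u) 0])) hβ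
    nlinarith
  · have : min r (q / 2) * β ≤ r * u := by nlinarith
    nlinarith [le_max_right (q - u) 0]

lemma le_abs_sub_of_abs_sub_lt {t c c' r : ℝ} (ht : |t - c| < r) (hsep : 2 * r ≤ |c - c'|) :
    r ≤ |t - c'| := by
  linarith [abs_sub_le c t c', abs_sub_comm c t]

lemma lt_iff_lt_of_separated {c c' b x r : ℝ} (hb : |b - c'| < r) (hsep : 6 * r ≤ |c - c'|)
    (hx : x ∈ Set.Ioo (c - 3 * r) (c + 3 * r)) : x < b ↔ c < c' := by
  obtain ⟨hx₁, hx₂⟩ := hx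
  have := abs_lt.1 hb
  rcases abs_cases (c - c') with ⟨h, _⟩ | ⟨h, _⟩ <;> constructor <;> intro <;> linarith

lemma mul_sum_le_sum_mul_of_le {ι : Type*} [Fintype ι] {w d : ι → ℝ} {s : Finset ι} {r : ℝ}
    (hw : ∀ i, 0 ≤ w i) (hd : ∀ i, 0 ≤ d i) (hrd : ∀ i ∈ s, r ≤ d i) :
    r * ∑ i ∈ s, w i ≤ ∑ i, w i * d i :=
  calc r * ∑ i ∈ s, w i = ∑ i ∈ s, w i * r := by rw [mul_sum]; simp_rw [mul_comm]
    _ ≤ ∑ i ∈ s, w i * d i :=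
      sum_le_sum fun i hi => mul_le_mul_of_nonneg_left (hrd i hi) (hw i)
    _ ≤ ∑ i, w i * d i :=
      sum_le_sum_of_subset_of_nonneg (subset_univ s) fun i _ _ => mul_nonneg (hw i) (hd i)

lemma mul_abs_sub_le_setIntegral_uIoo {f : ℝ → ℝ} {u v m : ℝ}
    (hf : IntegrableOn f (Set.uIoo u v)) (hm : ∀ x ∈ Set.uIoo u v, m ≤ f x) :
    m * |v - u| ≤ ∫ x in Set.uIoo u v, f x := by
  have := setIntegral_mono_on (integrableOn_const measure_Ioo_lt_top.ne) hf measurableSet_Ioo hm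
  rwa [setIntegral_const, Measure.real, Real.volume_uIoo, ENNReal.toReal_ofReal (abs_nonneg _),
    smul_eq_mul, mul_comm] at this

lemma mul_sub_le_setIntegral_Ioo {f : ℝ → ℝ} {u v m : ℝ} (huv : u ≤ v)
    (hf : IntegrableOn f (Set.Ioo u v)) (hm : ∀ x ∈ Set.Ioo u v, m ≤ f x) :
    m * (v - u) ≤ ∫ x in Set.Ioo u v, f x := by
  rw [← Set.uIoo_of_le huv] at hf hm ⊢
  simpa [abs_of_nonneg (sub_nonneg.2 huv)] using mul_abs_sub_le_setIntegral_uIoo hf hm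

lemma setIntegral_add_setIntegral_le {α : Type*} [MeasurableSpace α] {μ : Measure α}
    {f : α → ℝ} {s t u : Set α} (hf : IntegrableOn f u μ) (hf0 : ∀ x, 0 ≤ f x)
    (hst : Disjoint s t) (ht : MeasurableSet t) (hsu : s ⊆ u) (htu : t ⊆ u) :
    ∫ x in s, f x ∂μ + ∫ x in t, f x ∂μ ≤ ∫ x in u, f x ∂μ := by
  rw [← setIntegral_union hst ht (hf.mono_set hsu) (hf.mono_set htu)]
  exact setIntegral_mono_set hf (Filter.Eventually.of_forall hf0)
    (Set.union_subset hsu htu).eventuallyLE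

lemma sum_setIntegral_le_integral {α ι : Type*} [MeasurableSpace α] {μ : Measure α}
    [Fintype ι] {f : α → ℝ} {t : ι → Set α} (hf : Integrable f μ) (hf0 : ∀ x, 0 ≤ f x)
    (ht : ∀ i, MeasurableSet (t i)) (hdisj : Pairwise (Function.onFun Disjoint t)) :
    ∑ i, ∫ x in t i, f x ∂μ ≤ ∫ x, f x ∂μ := by
  rw [← integral_iUnion_fintype ht hdisj fun i => hf.integrableOn]
  exact setIntegral_le_integral hf (Filter.Eventually.of_forall hf0)

lemma setIntegral_add_add_le_setIntegral_window {f : ℝ → ℝ} {c b r : ℝ} (hf : Integrable f)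
    (hf0 : ∀ x, 0 ≤ f x) (hb : |b - c| < r) :
    (∫ x in Set.Ioo (c - 3 * r) (c - r), f x) + (∫ x in Set.uIoo c b, f x)
        + ∫ x in Set.Ioo (c + r) (c + 3 * r), f x
      ≤ ∫ x in Set.Ioo (c - 3 * r) (c + 3 * r), f x := by
  have hb' := abs_lt.1 hb
  have hmid : Set.uIoo c b ⊆ Set.Ioo (c - r) (c + r) :=
    Set.uIoo_subset_Ioo ⟨by linarith, by linarith⟩ ⟨by linarith, by linarith⟩
  calc
    _ ≤ (∫ x in Set.Ioo (c - 3 * r) (c - r) ∪ Set.uIoo c b, f x)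
          + ∫ x in Set.Ioo (c + r) (c + 3 * r), f x := by
      gcongr
      exact setIntegral_add_setIntegral_le hf.integrableOn hf0
        (Set.disjoint_left.2 fun x h₁ h₂ => by linarith [h₁.2, (hmid h₂).1])
        measurableSet_Ioo Set.subset_union_left Set.subset_union_right
    _ ≤ _ := by
      refine setIntegral_add_setIntegral_le hf.integrableOn hf0
        (Set.disjoint_left.2 fun x h₁ h₂ => ?_) measurableSet_Ioo
        (Set.union_subset (Set.Ioo_subset_Ioo le_rfl (by linarith))
          (hmid.trans (Set.Ioo_subset_Ioo (by linarith) (by linarith))))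
        (Set.Ioo_subset_Ioo (by linarith) le_rfl)
      rcases h₁ with h₁ | h₁
      · linarith [h₁.2, h₂.1]
      · linarith [(hmid h₁).2, h₂.1]

section Coupling

variable {ι : Type*} [Fintype ι]

def couplingCosts (θ θ0 p p0 : ι → ℝ) : Set ℝ :=
  {s | ∃ Q : ι → ι → ℝ, (∀ i j, 0 ≤ Q i j) ∧ (∀ i, ∑ j, Q i j = p i) ∧
    (∀ j, ∑ i, Q i j = p0 j) ∧ s = ∑ i, ∑ j, Q i j * |θ i - θ0 j|}

lemma exists_coupling_of_sInf_couplingCosts_lt {θ θ0 p p0 : ι → ℝ} {δ : ℝ}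
    (hp : ∀ i, 0 ≤ p i) (hp0 : ∀ j, 0 ≤ p0 j) (hps : ∑ i, p i = 1) (hp0s : ∑ j, p0 j = 1)
    (h : sInf (couplingCosts θ θ0 p p0) < δ) :
    ∃ Q : ι → ι → ℝ, (∀ i j, 0 ≤ Q i j) ∧ (∀ i, ∑ j, Q i j = p i) ∧
      (∀ j, ∑ i, Q i j = p0 j) ∧ ∑ i, ∑ j, Q i j * |θ i - θ0 j| < δ := by
  have hne : (couplingCosts θ θ0 p p0).Nonempty :=
    ⟨_, fun i j => p i * p0 j, fun i j => mul_nonneg (hp i) (hp0 j),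
      fun i => by rw [← mul_sum, hp0s, mul_one], fun j => by rw [← sum_mul, hps, one_mul], rfl⟩
  obtain ⟨_, ⟨Q, hQ, hrow, hcol, rfl⟩, hlt⟩ := exists_lt_of_csInf_lt hne h
  exact ⟨Q, hQ, hrow, hcol, hlt⟩

lemma exists_perm_abs_sub_lt_of_transportCost_lt {θ θ0 p p0 : ι → ℝ} {Q : ι → ι → ℝ}
    {r δ : ℝ} (hQ : ∀ i j, 0 ≤ Q i j) (hrow : ∀ i, ∑ j, Q i j = p i)
    (hcol : ∀ j, ∑ i, Q i j = p0 j) (hcost : ∑ i, ∑ j, Q i j * |θ i - θ0 j| < δ)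
    (hsep : ∀ i j, i ≠ j → 2 * r ≤ |θ0 i - θ0 j|) (hδ : ∀ i, δ ≤ r * p0 i) :
    ∃ τ : Equiv.Perm ι, ∀ i, |θ (τ i) - θ0 i| < r ∧ r * |p (τ i) - p0 i| < δ := by
  classical
  set cost := ∑ i, ∑ j, Q i j * |θ i - θ0 j|
  have hcol_le (j : ι) (s : Finset ι) (hs : ∀ i ∈ s, r ≤ |θ i - θ0 j|) :
      r * ∑ i ∈ s, Q i j ≤ cost :=
    (mul_sum_le_sum_mul_of_le (fun i => hQ i j) (fun _ => abs_nonneg _) hs).trans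
      (sum_le_sum fun i _ =>
        single_le_sum (f := fun j => Q i j * |θ i - θ0 j|)
          (fun j _ => mul_nonneg (hQ i j) (abs_nonneg _)) (mem_univ j))
  have hrow_le (i : ι) (s : Finset ι) (hs : ∀ j ∈ s, r ≤ |θ i - θ0 j|) :
      r * ∑ j ∈ s, Q i j ≤ cost :=
    (mul_sum_le_sum_mul_of_le (hQ i) (fun _ => abs_nonneg _) hs).trans
      (single_le_sum (f := fun i => ∑ j, Q i j * |θ i - θ0 j|)
        (fun i _ => sum_nonneg fun j _ => mul_nonneg (hQ i j) (abs_nonneg _)) (mem_univ i))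
  have hclose (j : ι) : ∃ i, |θ i - θ0 j| < r := by
    by_contra! h
    have := hcol_le j univ fun i _ => h i
    rw [hcol] at this
    linarith [hδ j]
  choose σ hσ using hclose
  have hσ_inj : Function.Injective σ := fun i i' h => by
    by_contra hne
    exact (le_abs_sub_of_abs_sub_lt (hσ i) (hsep i i' hne)).not_gt (h ▸ hσ i')
  set τ := Equiv.ofBijective σ (Finite.injective_iff_bijective.1 hσ_inj)
  refine ⟨τ, fun i => ⟨hσ i, ?_⟩⟩
  have hr : 0 < r := (abs_nonneg _).trans_lt (hσ i)
  have hrow_far := hrow_le (σ i) (univ.erase i) fun j hj =>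
    le_abs_sub_of_abs_sub_lt (hσ i) (hsep i j (ne_of_mem_erase hj).symm)
  have hcol_far := hcol_le i (univ.erase (σ i)) fun j hj => by
    obtain ⟨i', rfl⟩ := τ.surjective j
    have hi' : i' ≠ i := fun h => ne_of_mem_erase hj (congrArg σ h)
    by_contra! h
    exact (le_abs_sub_of_abs_sub_lt h (hsep i i' hi'.symm)).not_gt (hσ i')
  have hp : p (σ i) - p0 i
      = ∑ j ∈ univ.erase i, Q (σ i) j - ∑ j ∈ univ.erase (σ i), Q j i := by
    rw [← hrow, ← hcol, ← add_sum_erase _ _ (mem_univ i),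
      ← add_sum_erase _ _ (mem_univ (σ i))]
    ring
  calc r * |p (τ i) - p0 i|
      = |r * ∑ j ∈ univ.erase i, Q (σ i) j - r * ∑ j ∈ univ.erase (σ i), Q j i| := by
        rw [← mul_sub, ← hp, abs_mul, abs_of_pos hr]; rfl
    _ ≤ cost := abs_sub_le_of_nonneg_of_le
        (mul_nonneg hr.le (sum_nonneg fun j _ => hQ _ _)) hrow_far
        (mul_nonneg hr.le (sum_nonneg fun j _ => hQ _ _)) hcol_far
    _ < δ := hcost

end Coupling

noncomputable def uniformMixture {ι : Type*} [Fintype ι] (w θ : ι → ℝ) (x : ℝ) : ℝ :=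
  ∑ i, w i * (Set.Ioo (0 : ℝ) (θ i)).indicator (fun _ => 1 / θ i) x

section UniformMixture

variable {ι : Type*} [Fintype ι]

lemma integrable_uniformMixture (w θ : ι → ℝ) : Integrable (uniformMixture w θ) :=
  integrable_finsetSum _ fun i _ =>
    ((integrable_indicator_iff measurableSet_Ioo).2
      (integrableOn_const measure_Ioo_lt_top.ne)).const_mul (w i)

lemma uniformMixture_comp_perm (w θ : ι → ℝ) (τ : Equiv.Perm ι) :
    uniformMixture (w ∘ τ) (θ ∘ τ) = uniformMixture w θ :=
  funext fun x =>
    Equiv.sum_comp τ fun i => w i * (Set.Ioo 0 (θ i)).indicator (fun _ => 1 / θ i) x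

lemma uniformMixture_apply_eq_sum_add_ite {w θ : ι → ℝ} {x : ℝ} (hx : 0 < x)
    {s : Finset ι} {i : ι} (hi : i ∉ s) (hs : ∀ j, j ≠ i → (x < θ j ↔ j ∈ s)) :
    uniformMixture w θ x = ∑ j ∈ s, w j / θ j + if x < θ i then w i / θ i else 0 := by
  classical
  have hterm (j : ι) : w j * (Set.Ioo 0 (θ j)).indicator (fun _ => 1 / θ j) x
      = (if j ∈ s then w j / θ j else 0)
        + if j = i then (if x < θ i then w i / θ i else 0) else 0 := by
    rw [Set.indicator_apply]
    by_cases hj : j = i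
    · subst hj; simp [hi, hx, div_eq_mul_inv]
    · simp [hj, ← hs j hj, hx, div_eq_mul_inv]
  simp only [uniformMixture, hterm, sum_add_distrib, sum_ite_mem, univ_inter, sum_ite_eq',
    mem_univ, if_true]

variable {a b P p0 : ι → ℝ} {r q : ℝ} {i : ι}

noncomputable def rightPlateau (a b P p0 : ι → ℝ) (i : ι) : ℝ :=
  ∑ j ∈ univ.filter (fun j => a i < a j), (P j / b j - p0 j / a j)

lemma uniformMixture_sub_apply_of_mem_window (ha : ∀ i, 3 * r ≤ a i)
    (hsep : ∀ i j, i ≠ j → 6 * r ≤ |a i - a j|) (hb : ∀ i, |b i - a i| < r) {x : ℝ}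
    (hx : x ∈ Set.Ioo (a i - 3 * r) (a i + 3 * r)) :
    uniformMixture P b x - uniformMixture p0 a x = rightPlateau a b P p0 i
      + (if x < b i then P i / b i else 0) - (if x < a i then p0 i / a i else 0) := by
  have hx0 : 0 < x := by linarith [ha i, hx.1]
  have hr : 0 < r := (abs_nonneg _).trans_lt (hb i)
  have hi : i ∉ univ.filter (fun j => a i < a j) := by simp
  have hmem (j : ι) (hj : j ≠ i) : a i < a j ↔ j ∈ univ.filter (fun j => a i < a j) := by simp
  rw [uniformMixture_apply_eq_sum_add_ite hx0 hi fun j hj =>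
      (lt_iff_lt_of_separated (hb j) (hsep i j hj.symm) hx).trans (hmem j hj),
    uniformMixture_apply_eq_sum_add_ite hx0 hi fun j hj =>
      (lt_iff_lt_of_separated (by simpa using hr) (hsep i j hj.symm) hx).trans (hmem j hj),
    rightPlateau, sum_sub_distrib]
  ring

lemma plateau_add_le_setIntegral_window (ha : ∀ i, 3 * r ≤ a i)
    (hsep : ∀ i j, i ≠ j → 6 * r ≤ |a i - a j|) (hb : ∀ i, |b i - a i| < r)
    (hq : q ≤ P i / b i) (hq0 : q ≤ p0 i / a i) :
    2 * r * |rightPlateau a b P p0 i + (P i / b i - p0 i / a i)|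
      + 2 * r * |rightPlateau a b P p0 i| + max (q - |rightPlateau a b P p0 i|) 0 * |b i - a i|
      ≤ ∫ x in Set.Ioo (a i - 3 * r) (a i + 3 * r),
          |uniformMixture P b x - uniformMixture p0 a x| := by
  set R := rightPlateau a b P p0 i
  set f := fun x => |uniformMixture P b x - uniformMixture p0 a x|
  have hf : Integrable f :=
    ((integrable_uniformMixture P b).sub (integrable_uniformMixture p0 a)).abs
  have hbi := abs_lt.1 (hb i)
  have hf_eq {x} (hx : x ∈ Set.Ioo (a i - 3 * r) (a i + 3 * r)) :
      f x = |R + (if x < b i then P i / b i else 0) - (if x < a i then p0 i / a i else 0)| :=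
    congrArg abs (uniformMixture_sub_apply_of_mem_window ha hsep hb hx)
  have hleft := mul_sub_le_setIntegral_Ioo (by linarith) hf.integrableOn
    (m := |R + (P i / b i - p0 i / a i)|) (u := a i - 3 * r) (v := a i - r) fun x hx => by
      rw [hf_eq ⟨hx.1, by linarith [hx.2]⟩, if_pos (by linarith [hx.2]),
        if_pos (by linarith [hx.2]), add_sub_assoc]
  have hright := mul_sub_le_setIntegral_Ioo (by linarith) hf.integrableOn
    (m := |R|) (u := a i + r) (v := a i + 3 * r) fun x hx => by
      rw [hf_eq ⟨by linarith [hx.1], hx.2⟩, if_neg (by linarith [hx.1]),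
        if_neg (by linarith [hx.1]), add_zero, sub_zero]
  have hmid : max (q - |R|) 0 * |b i - a i| ≤ ∫ x in Set.uIoo (a i) (b i), f x := by
    refine mul_abs_sub_le_setIntegral_uIoo hf.integrableOn fun x hx => max_le ?_ (abs_nonneg _)
    have hx' := Set.uIoo_subset_Ioo (a₂ := a i - r) (b₂ := a i + r)
      ⟨by linarith, by linarith⟩ ⟨by linarith, by linarith⟩ hx
    rw [hf_eq ⟨by linarith [hx'.1], by linarith [hx'.2]⟩]
    rw [Set.uIoo_eq_union] at hx
    rcases hx with ⟨h₁, h₂⟩ | ⟨h₁, h₂⟩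
    · rw [if_pos h₂, if_neg h₁.not_gt, sub_zero]
      linarith [neg_abs_le R, le_abs_self (R + P i / b i)]
    · rw [if_neg h₁.not_gt, if_pos h₂, add_zero]
      linarith [le_abs_self R, neg_le_abs (R - p0 i / a i)]
  linarith [setIntegral_add_add_le_setIntegral_window hf (fun x => abs_nonneg _) (hb i)]

theorem min_mul_sum_le_mul_integral_of_separated (ha : ∀ i, 3 * r ≤ a i)
    (hsep : ∀ i j, i ≠ j → 6 * r ≤ |a i - a j|) (hb : ∀ i, |b i - a i| < r) (hq₀ : 0 ≤ q)
    (hq : ∀ i, q ≤ P i / b i) (hq0 : ∀ i, q ≤ p0 i / a i) (hp0 : ∀ i, 0 ≤ p0 i) {K : ℝ}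
    (hK : ∀ i, b i + p0 i / a i + 1 ≤ K) :
    min r (q / 2) * ∑ i, (|b i - a i| + |P i - p0 i|)
      ≤ K * ∫ x, |uniformMixture P b x - uniformMixture p0 a x| := by
  rcases isEmpty_or_nonempty ι with hι | ⟨⟨i₀⟩⟩
  · simp [uniformMixture]
  set f := fun x => |uniformMixture P b x - uniformMixture p0 a x|
  have hr : 0 < r := (abs_nonneg _).trans_lt (hb i₀)
  have hm : 0 ≤ min r (q / 2) := le_min hr.le (by linarith)
  have hpos (i : ι) : 0 < a i ∧ 0 < b i :=
    ⟨by linarith [ha i], by linarith [ha i, (abs_lt.1 (hb i)).1]⟩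
  have hK₀ : 0 ≤ K := by
    linarith [hK i₀, (hpos i₀).2, div_nonneg (hp0 i₀) (hpos i₀).1.le]
  have hatom (i : ι) : min r (q / 2) * (|b i - a i| + |P i - p0 i|)
      ≤ K * ∫ x in Set.Ioo (a i - 3 * r) (a i + 3 * r), f x := by
    set R := rightPlateau a b P p0 i
    obtain ⟨hai, hbi⟩ := hpos i
    have hjump : |P i / b i - p0 i / a i| ≤ |R| + |R + (P i / b i - p0 i / a i)| := by
      simpa [add_comm |R|] using abs_sub (R + (P i / b i - p0 i / a i)) R
    have hweight : |b i - a i| + |P i - p0 i|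
        ≤ K * (|R| + |R + (P i / b i - p0 i / a i)| + |b i - a i|) :=
      calc |b i - a i| + |P i - p0 i|
          ≤ |b i - a i| + (b i * |P i / b i - p0 i / a i| + p0 i / a i * |b i - a i|) := by
            gcongr; exact abs_sub_le_mul_abs_div_sub_div hai hbi (hp0 i)
        _ ≤ (b i + p0 i / a i + 1) * (|R| + |R + (P i / b i - p0 i / a i)| + |b i - a i|) := by
            have : 0 ≤ p0 i / a i := div_nonneg (hp0 i) hai.le
            nlinarith [abs_nonneg R, abs_nonneg (R + (P i / b i - p0 i / a i)),
              abs_nonneg (b i - a i)]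
        _ ≤ _ := mul_le_mul_of_nonneg_right (hK i) (by positivity)
    calc min r (q / 2) * (|b i - a i| + |P i - p0 i|)
        ≤ K * (min r (q / 2) * (|R| + |R + (P i / b i - p0 i / a i)| + |b i - a i|)) := by
          nlinarith [mul_le_mul_of_nonneg_left hweight hm]
      _ ≤ K * (2 * r * |R + (P i / b i - p0 i / a i)| + 2 * r * |R|
            + max (q - |R|) 0 * |b i - a i|) :=
          mul_le_mul_of_nonneg_left (min_mul_add_add_le hr.le (abs_nonneg _) (abs_nonneg _)
            (abs_nonneg _) (hb i).le) hK₀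
      _ ≤ _ := mul_le_mul_of_nonneg_left
          (plateau_add_le_setIntegral_window ha hsep hb (hq i) (hq0 i)) hK₀
  have hdisj : Pairwise (Function.onFun Disjoint fun i => Set.Ioo (a i - 3 * r) (a i + 3 * r)) :=
    fun i j hij => Set.disjoint_left.2 fun x hi hj => by
      have := hsep i j hij
      rcases abs_cases (a i - a j) with ⟨h, _⟩ | ⟨h, _⟩
      · linarith [hi.1, hj.2]
      · linarith [hi.2, hj.1]
  calc min r (q / 2) * ∑ i, (|b i - a i| + |P i - p0 i|)
      ≤ ∑ i, K * ∫ x in Set.Ioo (a i - 3 * r) (a i + 3 * r), f x := by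
        rw [mul_sum]; exact sum_le_sum fun i _ => hatom i
    _ ≤ K * ∫ x, f x := by
        rw [← mul_sum]
        exact mul_le_mul_of_nonneg_left (sum_setIntegral_le_integral
          ((integrable_uniformMixture P b).sub (integrable_uniformMixture p0 a)).abs
          (fun x => abs_nonneg _) (fun _ => measurableSet_Ioo) hdisj) hK₀

end UniformMixture
theorem exists_mul_sum_le_integral_of_near {ι : Type*} [Fintype ι] {a p0 : ι → ℝ}
    (ha : ∀ i, 0 < a i) (ha_inj : Function.Injective a) (hp0 : ∀ i, 0 < p0 i) :
    ∃ c > 0, ∃ r > 0, ∃ ε > 0, (∀ i j, i ≠ j → 2 * r ≤ |a i - a j|) ∧ (∀ i, ε ≤ p0 i) ∧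
      ∀ b P : ι → ℝ, (∀ i, |b i - a i| < r) → (∀ i, |P i - p0 i| < ε) →
        c * ∑ i, (|b i - a i| + |P i - p0 i|)
          ≤ 1 / 2 * ∫ x, |uniformMixture P b x - uniformMixture p0 a x| := by
  obtain ⟨d, hd, hd_le⟩ := exists_pos_forall_le
    (x := fun ij : {ij : ι × ι // ij.1 ≠ ij.2} => |a ij.1.1 - a ij.1.2|)
    fun ij => abs_pos.2 (sub_ne_zero.2 (ha_inj.ne ij.2))
  obtain ⟨d', hd', hd'_le⟩ := exists_pos_forall_le ha
  obtain ⟨e, he, he_le⟩ := exists_pos_forall_le hp0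
  obtain ⟨q, hq, hq_le⟩ := exists_pos_forall_le (x := fun i => p0 i / (4 * a i))
    fun i => div_pos (hp0 i) (by linarith [ha i])
  set r := min d d' / 6 with hr_def
  have hr : 0 < r := by positivity
  have hsep (i j : ι) (hij : i ≠ j) : 6 * r ≤ |a i - a j| := by
    linarith [min_le_left d d', hd_le ⟨(i, j), hij⟩]
  have ha_r (i : ι) : 3 * r ≤ a i := by linarith [min_le_right d d', hd'_le i]
  set K := 1 + ∑ i, (2 * a i + p0 i / a i)
  have hK : 0 < K := by
    have : 0 ≤ ∑ i, (2 * a i + p0 i / a i) :=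
      sum_nonneg fun i _ => by have := ha i; have := hp0 i; positivity
    linarith
  refine ⟨min r (q / 2) / (2 * K), by positivity, r, hr, e / 2, by positivity,
    fun i j hij => by linarith [hsep i j hij], fun i => by linarith [he_le i], fun b P hb hP => ?_⟩
  have hb_pos (i : ι) : 0 < b i ∧ b i ≤ 2 * a i := by
    have := abs_lt.1 (hb i); have := ha_r i
    constructor <;> linarith
  have hP (i : ι) : p0 i / 2 ≤ P i := by linarith [(abs_lt.1 (hP i)).1, he_le i]
  have key := min_mul_sum_le_mul_integral_of_separated (P := P) ha_r hsep hb hq.le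
    (fun i => (hq_le i).trans <| by
      rw [show p0 i / (4 * a i) = p0 i / 2 / (2 * a i) by ring]
      exact div_le_div₀ (by linarith [hp0 i, hP i]) (hP i) (hb_pos i).1 (hb_pos i).2)
    (fun i => (hq_le i).trans <| div_le_div_of_nonneg_left (hp0 i).le (ha i) (by linarith [ha i]))
    (fun i => (hp0 i).le) (K := K) fun i => by
      have := single_le_sum (f := fun i => 2 * a i + p0 i / a i)
        (fun i _ => by have := ha i; have := hp0 i; positivity) (mem_univ i)
      linarith [(hb_pos i).2]
  calc min r (q / 2) / (2 * K) * ∑ i, (|b i - a i| + |P i - p0 i|)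
      = (min r (q / 2) * ∑ i, (|b i - a i| + |P i - p0 i|)) / (2 * K) := by ring
    _ ≤ K * (∫ x, |uniformMixture P b x - uniformMixture p0 a x|) / (2 * K) := by gcongr
    _ = _ := by field_simp

theorem stmt_15_general (k0 : ℕ)
    (θ0 : Fin k0 → ℝ) (hθ0pos : ∀ i, 0 < θ0 i) (hθ0inj : Function.Injective θ0)
    (p0 : Fin k0 → ℝ) (hp0 : ∀ i, 0 < p0 i) (hp0s : ∑ i, p0 i = 1) :
    ∃ c > 0, ∃ δ > 0,
      ∀ (θ : Fin k0 → ℝ) (p : Fin k0 → ℝ),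
        (∀ i, 0 < θ i) → Function.Injective θ → (∀ i, 0 < p i) → (∑ i, p i = 1) →
        sInf {s : ℝ | ∃ Q : Fin k0 → Fin k0 → ℝ,
            (∀ i j, 0 ≤ Q i j) ∧ (∀ i, ∑ j, Q i j = p i) ∧ (∀ j, ∑ i, Q i j = p0 j) ∧
            s = ∑ i, ∑ j, Q i j * |θ i - θ0 j|} < δ →
        c * (⨅ τ : Equiv.Perm (Fin k0), ∑ i, (|θ (τ i) - θ0 i| + |p (τ i) - p0 i|)) ≤
          (1 / 2) * ∫ x,
            |(∑ i, p i * (Set.Ioo (0 : ℝ) (θ i)).indicator (fun _ => 1 / θ i) x)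
              - ∑ i, p0 i * (Set.Ioo (0 : ℝ) (θ0 i)).indicator (fun _ => 1 / θ0 i) x|
            ∂volume := by
  obtain ⟨c, hc, r, hr, ε, hε, hsep, hε_le, hbound⟩ :=
    exists_mul_sum_le_integral_of_near hθ0pos hθ0inj hp0
  refine ⟨c, hc, r * ε, by positivity, fun θ p _ _ hp hps hW => ?_⟩
  obtain ⟨Q, hQ, hrow, hcol, hcost⟩ :=
    exists_coupling_of_sInf_couplingCosts_lt (fun i => (hp i).le) (fun j => (hp0 j).le) hps hp0s hW
  obtain ⟨τ, hτ⟩ := exists_perm_abs_sub_lt_of_transportCost_lt hQ hrow hcol hcost hsep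
    fun i => mul_le_mul_of_nonneg_left (hε_le i) hr.le
  have hτ_bound := hbound (θ ∘ τ) (p ∘ τ) (fun i => (hτ i).1)
    fun i => lt_of_mul_lt_mul_left (hτ i).2 hr.le
  rw [uniformMixture_comp_perm] at hτ_bound
  refine (mul_le_mul_of_nonneg_left (ciInf_le ⟨0, ?_⟩ τ) hc.le).trans hτ_bound
  rintro _ ⟨σ, rfl⟩
  positivity

/-- Inverse bound for finite mixtures of uniform kernels `f(x|θ) = θ⁻¹ 1_{(0,θ)}(x)`:
for any `G₀ ∈ 𝓔_{k₀}((0,∞))` there are `c > 0` and `δ > 0` such that every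
`G ∈ 𝓔_{k₀}((0,∞))` with `W₁(G,G₀) < δ` satisfies `c·D₁(G,G₀) ≤ V(P_G, P_{G₀})`
(so the liminf of `V/D₁` as `G → G₀` in `W₁` is positive). -/
theorem stmt_15 (k0 : ℕ) (hk0 : 1 ≤ k0)
    (θ0 : Fin k0 → ℝ) (hθ0pos : ∀ i, 0 < θ0 i) (hθ0inj : Function.Injective θ0)
    (p0 : Fin k0 → ℝ) (hp0 : ∀ i, 0 < p0 i) (hp0s : ∑ i, p0 i = 1) :
    ∃ c > 0, ∃ δ > 0,
      ∀ (θ : Fin k0 → ℝ) (p : Fin k0 → ℝ),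
        (∀ i, 0 < θ i) → Function.Injective θ → (∀ i, 0 < p i) → (∑ i, p i = 1) →
        sInf {s : ℝ | ∃ Q : Fin k0 → Fin k0 → ℝ,
            (∀ i j, 0 ≤ Q i j) ∧ (∀ i, ∑ j, Q i j = p i) ∧ (∀ j, ∑ i, Q i j = p0 j) ∧
            s = ∑ i, ∑ j, Q i j * |θ i - θ0 j|} < δ →
        c * (⨅ τ : Equiv.Perm (Fin k0), ∑ i, (|θ (τ i) - θ0 i| + |p (τ i) - p0 i|)) ≤
          (1 / 2) * ∫ x,
            |(∑ i, p i * (Set.Ioo (0 : ℝ) (θ i)).indicator (fun _ => 1 / θ i) x)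
              - ∑ i, p0 i * (Set.Ioo (0 : ℝ) (θ0 i)).indicator (fun _ => 1 / θ0 i) x|
            ∂volume :=
  stmt_15_general k0 θ0 hθ0pos hθ0inj p0 hp0 hp0s
end
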